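/- arXiv:2107.11944 — 4 statements merged into one kernel-verified Lean document; each statement's English description precedes it below -/
import Mathlib

section
/- Let E be a real Banach space, let M > 0 and λ > 0, and let S : [0,∞) → L(E) be a strongly continuous family of bounded linear operators on E satisfying ‖S(t)x‖_E ≤ M e^{−λt} ‖x‖_E for all t ≥ 0 and x ∈ E. Let 1 < p < ∞, let p' = p/(p−1), and let b ≥ 0 satisfy bp' > 1. Then there is a constant C, depending only on M, λ, p and b (in particular independent of T), such that for every T ∈ (0,∞) and every strongly measurable f : (0,T) → E with (∫_0^T (⟨t⟩^b ‖f(t)‖_E)^p dt)^{1/p} < ∞, the Duhamel integral u(t) := ∫_0^t S(t−s) f(s) ds is defined for almost every t ∈ (0,T) and satisfies (∫_0^T (⟨t⟩^b ‖u(t)‖_E)^p dt)^{1/p} ≤ C (∫_0^T (⟨t⟩^b ‖f(t)‖_E)^p dt)^{1/p}. -/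
/-!
Peetre's inequality `⟨t⟩ ≤ √2 ⟨t - s⟩ ⟨s⟩`, together with the fact that a polynomial weight is
absorbed by half of the exponential decay, gives
`⟨t⟩ ^ b ‖S (t - s) x‖ ≤ M K e^{-λ (t - s) / 2} ⟨s⟩ ^ b ‖x‖`. Hence `⟨t⟩ ^ b ‖u t‖` is dominated
by the convolution of the kernel `M K e^{-λ r / 2} 1_{r > 0}`, of integral `2 M K / λ`, with
`⟨s⟩ ^ b ‖f s‖ 1_{(0, T)}`, and Young's inequality `L¹ * Lᵖ ⊆ Lᵖ` (Hölder against the kernel,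
then Tonelli) bounds its `Lᵖ` norm by `2 M K / λ` times that of the weighted `f`, whatever `T`.
-/

open MeasureTheory Set
open scoped ENNReal

theorem sqrt_one_add_sq_le_one_add {r : ℝ} (hr : 0 ≤ r) : √(1 + r ^ 2) ≤ 1 + r :=
  Real.sqrt_le_iff.2 ⟨by linarith, by nlinarith⟩

theorem sqrt_one_add_sq_le_sqrt_two_mul (s t : ℝ) :
    √(1 + t ^ 2) ≤ √2 * √(1 + (t - s) ^ 2) * √(1 + s ^ 2) := by
  rw [← Real.sqrt_mul zero_le_two, ← Real.sqrt_mul (by positivity)]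
  exact Real.sqrt_le_sqrt (by nlinarith [sq_nonneg (t - s - s), sq_nonneg ((t - s) * s)])

theorem one_add_rpow_le_mul_exp {b ε : ℝ} (hb : 0 ≤ b) (hε : 0 < ε) :
    ∃ K > 0, ∀ r : ℝ, 0 ≤ r → (1 + r) ^ b ≤ K * Real.exp (ε * r) := by
  set c := min 1 (ε / (b + 1))
  have hc : 0 < c := lt_min one_pos (by positivity)
  have hcb : c * b ≤ ε := by
    calc c * b ≤ ε / (b + 1) * (b + 1) := by gcongr <;> [exact min_le_right _ _; linarith]
      _ = ε := div_mul_cancel₀ _ (by positivity)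
  refine ⟨c⁻¹ ^ b, by positivity, fun r hr => ?_⟩
  -- `c (1 + r) ≤ 1 + c r ≤ exp (c r)` since `c ≤ 1`
  have hlin : 1 + r ≤ c⁻¹ * Real.exp (c * r) := by
    rw [le_inv_mul_iff₀ hc]
    nlinarith [Real.add_one_le_exp (c * r), min_le_left 1 (ε / (b + 1))]
  calc (1 + r) ^ b ≤ (c⁻¹ * Real.exp (c * r)) ^ b := by gcongr
    _ = c⁻¹ ^ b * Real.exp (c * b * r) := by
        rw [Real.mul_rpow (by positivity) (Real.exp_pos _).le, ← Real.exp_mul]; ring_nf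
    _ ≤ c⁻¹ ^ b * Real.exp (ε * r) := by gcongr

theorem sqrt_one_add_sq_rpow_mul_exp_le {b lam : ℝ} (hb : 0 ≤ b) (hlam : 0 < lam) :
    ∃ K > 0, ∀ s t : ℝ, s ≤ t → √(1 + t ^ 2) ^ b * Real.exp (-lam * (t - s))
      ≤ K * Real.exp (-(lam / 2) * (t - s)) * √(1 + s ^ 2) ^ b := by
  obtain ⟨K, hK, hgrowth⟩ := one_add_rpow_le_mul_exp hb (half_pos hlam)
  refine ⟨√2 ^ b * K, by positivity, fun s t hst => ?_⟩
  have hr : 0 ≤ t - s := sub_nonneg.2 hst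
  calc √(1 + t ^ 2) ^ b * Real.exp (-lam * (t - s))
      ≤ (√2 * (1 + (t - s)) * √(1 + s ^ 2)) ^ b * Real.exp (-lam * (t - s)) := by
        gcongr
        exact (sqrt_one_add_sq_le_sqrt_two_mul s t).trans
          (by gcongr; exact sqrt_one_add_sq_le_one_add hr)
    _ = √2 ^ b * (1 + (t - s)) ^ b * Real.exp (-lam * (t - s)) * √(1 + s ^ 2) ^ b := by
        rw [Real.mul_rpow (by positivity) (by positivity),
          Real.mul_rpow (by positivity) (by positivity)]
        ring
    _ ≤ √2 ^ b * (K * Real.exp (lam / 2 * (t - s))) * Real.exp (-lam * (t - s))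
          * √(1 + s ^ 2) ^ b := by
        gcongr
        exact hgrowth _ hr
    _ = √2 ^ b * K * Real.exp (-(lam / 2) * (t - s)) * √(1 + s ^ 2) ^ b := by
        have hexp : Real.exp (lam / 2 * (t - s)) * Real.exp (-lam * (t - s))
            = Real.exp (-(lam / 2) * (t - s)) := by rw [← Real.exp_add]; ring_nf
        linear_combination √2 ^ b * K * √(1 + s ^ 2) ^ b * hexp

theorem lintegral_Ioi_ofReal_mul_exp_neg {a c : ℝ} (ha : 0 < a) (hc : 0 ≤ c) :
    ∫⁻ r in Ioi 0, ENNReal.ofReal (c * Real.exp (-a * r)) = ENNReal.ofReal (c / a) := by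
  rw [← ofReal_integral_eq_lintegral_ofReal, integral_const_mul,
    integral_exp_mul_Ioi (neg_lt_zero.2 ha)]
  · simp [div_eq_mul_inv]
  · exact (integrableOn_exp_mul_Ioi (neg_lt_zero.2 ha) 0).const_mul c
  · exact ae_of_all _ fun r => by positivity

theorem continuous_uncurry_apply_of_norm_le {X 𝕜 E F : Type*} [TopologicalSpace X]
    [NontriviallyNormedField 𝕜] [SeminormedAddCommGroup E] [SeminormedAddCommGroup F]
    [NormedSpace 𝕜 E] [NormedSpace 𝕜 F] {S : X → E →L[𝕜] F} {C : ℝ}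
    (hS : ∀ x, Continuous fun a => S a x) (hC : ∀ a x, ‖S a x‖ ≤ C * ‖x‖) :
    Continuous fun q : X × E => S q.1 q.2 := by
  refine continuous_iff_continuousAt.2 fun ⟨a₀, x₀⟩ => ?_
  rw [ContinuousAt, tendsto_iff_norm_sub_tendsto_zero]
  refine squeeze_zero (fun _ => norm_nonneg _)
    (fun q => (?_ : _ ≤ C * ‖q.2 - x₀‖ + ‖S q.1 x₀ - S a₀ x₀‖)) ?_
  · calc ‖S q.1 q.2 - S a₀ x₀‖ = ‖S q.1 (q.2 - x₀) + (S q.1 x₀ - S a₀ x₀)‖ := by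
          rw [map_sub, sub_add_sub_cancel]
      _ ≤ _ := (norm_add_le _ _).trans (add_le_add_left (hC _ _) _)
  · have hcont : Continuous fun q : X × E => C * ‖q.2 - x₀‖ + ‖S q.1 x₀ - S a₀ x₀‖ :=
      by have := hS x₀; fun_prop
    simpa using hcont.tendsto (a₀, x₀)

namespace ENNReal

theorem lintegral_mul_rpow_le {α : Type*} [MeasurableSpace α] (μ : Measure α) {p : ℝ}
    (hp : 1 ≤ p) {g h : α → ℝ≥0∞} (hg : AEMeasurable g μ) (hh : AEMeasurable h μ) :
    (∫⁻ a, g a * h a ∂μ) ^ p ≤ (∫⁻ a, g a ∂μ) ^ (p - 1) * ∫⁻ a, g a * h a ^ p ∂μ := by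
  have hp0 : 0 < p := zero_lt_one.trans_le hp
  have hsplit : ∀ a, g a * h a = g a ^ (1 - p⁻¹) * (g a * h a ^ p) ^ p⁻¹ := fun a => by
    rw [mul_rpow_of_nonneg _ _ (inv_nonneg.2 hp0.le), ← rpow_mul, mul_inv_cancel₀ hp0.ne',
      rpow_one, ← mul_assoc, ← rpow_add_of_nonneg _ _ (sub_nonneg.2 (inv_le_one_of_one_le₀ hp))
      (inv_nonneg.2 hp0.le), sub_add_cancel, rpow_one]
  have holder : ∫⁻ a, g a * h a ∂μ
      ≤ (∫⁻ a, g a ∂μ) ^ (1 - p⁻¹) * (∫⁻ a, g a * h a ^ p ∂μ) ^ p⁻¹ := by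
    simpa only [Pi.mul_apply, ← hsplit] using lintegral_mul_norm_pow_le hg (hg.mul (hh.pow_const p))
      (sub_nonneg.2 (inv_le_one_of_one_le₀ hp)) (inv_nonneg.2 hp0.le) (sub_add_cancel 1 p⁻¹)
  calc (∫⁻ a, g a * h a ∂μ) ^ p
      ≤ ((∫⁻ a, g a ∂μ) ^ (1 - p⁻¹) * (∫⁻ a, g a * h a ^ p ∂μ) ^ p⁻¹) ^ p :=
        rpow_le_rpow holder hp0.le
    _ = (∫⁻ a, g a ∂μ) ^ (p - 1) * ∫⁻ a, g a * h a ^ p ∂μ := by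
        rw [mul_rpow_of_nonneg _ _ hp0.le, ← rpow_mul, ← rpow_mul, inv_mul_cancel₀ hp0.ne',
          rpow_one, sub_mul, one_mul, inv_mul_cancel₀ hp0.ne']

end ENNReal

theorem lintegral_convolution_rpow_le {G : Type*} [MeasurableSpace G] [AddCommGroup G]
    [MeasurableAdd₂ G] [MeasurableNeg G] (μ : Measure G) [SFinite μ] [μ.IsAddLeftInvariant]
    [μ.IsNegInvariant] {p : ℝ} (hp : 1 ≤ p) {g h : G → ℝ≥0∞} (hg : Measurable g)
    (hh : AEMeasurable h μ) :
    ∫⁻ x, (∫⁻ y, g (x - y) * h y ∂μ) ^ p ∂μ ≤ (∫⁻ x, g x ∂μ) ^ p * ∫⁻ y, h y ^ p ∂μ := by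
  have hkernel : AEMeasurable (fun z : G × G => g (z.1 - z.2) * h z.2 ^ p) (μ.prod μ) :=
    (hg.comp measurable_sub).aemeasurable.mul
      ((hh.pow_const p).comp_quasiMeasurePreserving Measure.quasiMeasurePreserving_snd)
  calc ∫⁻ x, (∫⁻ y, g (x - y) * h y ∂μ) ^ p ∂μ
      ≤ ∫⁻ x, (∫⁻ x, g x ∂μ) ^ (p - 1) * ∫⁻ y, g (x - y) * h y ^ p ∂μ ∂μ := by
        refine lintegral_mono fun x => ?_
        have := ENNReal.lintegral_mul_rpow_le μ hp
          (g := fun y => g (x - y)) (hg.comp (measurable_const.sub measurable_id)).aemeasurable hh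
        rwa [lintegral_sub_left_eq_self g x] at this
    _ = (∫⁻ x, g x ∂μ) ^ (p - 1) * ∫⁻ y, (∫⁻ x, g (x - y) ∂μ) * h y ^ p ∂μ := by
        rw [lintegral_const_mul'' _ hkernel.lintegral_prod_right', lintegral_lintegral_swap hkernel]
        congr 1
        exact lintegral_congr fun y =>
          lintegral_mul_const (h y ^ p) (hg.comp (measurable_id.sub_const y) :)
    _ = (∫⁻ x, g x ∂μ) ^ p * ∫⁻ y, h y ^ p ∂μ := by
        simp_rw [lintegral_sub_right_eq_self g]
        rw [lintegral_const_mul'' _ (hh.pow_const p), ← mul_assoc]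
        congr 1
        conv_rhs => rw [← sub_add_cancel p 1]
        rw [ENNReal.rpow_add_of_nonneg _ _ (sub_nonneg.2 hp) zero_le_one, ENNReal.rpow_one]

theorem integrable_of_integrable_mul_norm_rpow {α E : Type*} [MeasurableSpace α] {μ : Measure α}
    [IsFiniteMeasure μ] [NormedAddCommGroup E] {f : α → E} {w : α → ℝ} {p : ℝ} (hp : 1 ≤ p)
    (hw : ∀ a, 1 ≤ w a) (hf : AEStronglyMeasurable f μ)
    (hint : Integrable (fun a => (w a * ‖f a‖) ^ p) μ) : Integrable f μ := by
  have hnorm : Integrable (fun a => ‖f a‖ ^ p) μ := by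
    refine hint.mono' (hf.norm.aemeasurable.pow_const p).aestronglyMeasurable
      (ae_of_all _ fun a => ?_)
    rw [Real.norm_of_nonneg (by positivity)]
    gcongr
    exact le_mul_of_one_le_left (norm_nonneg _) (hw a)
  rw [← integrable_norm_iff hf]
  simpa using integrable_norm_rpow_of_le hf zero_le_one (zero_le_one.trans hp) hp hnorm

theorem integrable_apply_of_norm_le {α X E F : Type*} [MeasurableSpace α] {μ : Measure α}
    [TopologicalSpace X] [NormedAddCommGroup E] [NormedSpace ℝ E] [NormedAddCommGroup F]
    [NormedSpace ℝ F] {S : X → E →L[ℝ] F} {C : ℝ} (hS : Continuous fun q : X × E => S q.1 q.2)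
    (hC : ∀ a x, ‖S a x‖ ≤ C * ‖x‖) {τ : α → X} (hτ : AEStronglyMeasurable τ μ) {f : α → E}
    (hf : Integrable f μ) : Integrable (fun a => S (τ a) (f a)) μ :=
  (hf.norm.const_mul C).mono' (hS.comp_aestronglyMeasurable (hτ.prodMk hf.1))
    (ae_of_all _ fun _ => hC _ _)

theorem rpow_integral_rpow_le_mul_of_lintegral_le {α : Type*} [MeasurableSpace α]
    {μ : Measure α} {F G : α → ℝ} {p C : ℝ} (hp : 0 < p) (hF : ∀ a, 0 ≤ F a) (hG : ∀ a, 0 ≤ G a)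
    (hC : 0 ≤ C) (hGp : Integrable (fun a => G a ^ p) μ)
    (hle : ∫⁻ a, ENNReal.ofReal (F a) ^ p ∂μ
      ≤ ENNReal.ofReal C ^ p * ∫⁻ a, ENNReal.ofReal (G a) ^ p ∂μ) :
    (∫ a, F a ^ p ∂μ) ^ (1 / p) ≤ C * (∫ a, G a ^ p ∂μ) ^ (1 / p) := by
  have hofReal_rpow : ∀ a : ℝ, 0 ≤ a → ENNReal.ofReal (a ^ p) = ENNReal.ofReal a ^ p :=
    fun a ha => (ENNReal.ofReal_rpow_of_nonneg ha hp.le).symm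
  have hY : 0 ≤ ∫ a, G a ^ p ∂μ := integral_nonneg fun a => Real.rpow_nonneg (hG a) p
  have hbound : ∫⁻ a, ENNReal.ofReal ‖F a ^ p‖ ∂μ ≤ ENNReal.ofReal (C ^ p * ∫ a, G a ^ p ∂μ) := by
    rw [ENNReal.ofReal_mul (by positivity), hofReal_rpow C hC,
      ofReal_integral_eq_lintegral_ofReal hGp (ae_of_all _ fun a => Real.rpow_nonneg (hG a) p)]
    simpa only [Real.norm_of_nonneg (Real.rpow_nonneg (hF _) p), hofReal_rpow _ (hF _),
      hofReal_rpow _ (hG _)] using hle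
  -- the Bochner integral of `F ^ p` is bounded by its Lebesgue integral even if not integrable
  have hXY : ∫ a, F a ^ p ∂μ ≤ C ^ p * ∫ a, G a ^ p ∂μ :=
    (le_abs_self _).trans <| (norm_integral_le_lintegral_norm _).trans <|
      ENNReal.toReal_le_of_le_ofReal (by positivity) hbound
  calc (∫ a, F a ^ p ∂μ) ^ (1 / p) ≤ (C ^ p * ∫ a, G a ^ p ∂μ) ^ (1 / p) :=
        Real.rpow_le_rpow (integral_nonneg fun a => Real.rpow_nonneg (hF a) p) hXY (by positivity)
    _ = C * (∫ a, G a ^ p ∂μ) ^ (1 / p) := by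
        rw [Real.mul_rpow (by positivity) hY, ← Real.rpow_mul hC, mul_one_div_cancel hp.ne',
          Real.rpow_one]

section Duhamel

variable {E : Type*} [NormedAddCommGroup E] [NormedSpace ℝ E] {S : ℝ → E →L[ℝ] E}
  {w k : ℝ → ℝ} {T : ℝ} {f : ℝ → E}

theorem integrableOn_duhamel {C : ℝ} (hScont : ∀ x, ContinuousOn (fun t => S t x) (Ici 0))
    (hSbound : ∀ t, 0 ≤ t → ∀ x, ‖S t x‖ ≤ C * ‖x‖) (hf : IntegrableOn f (Ioo 0 T)) {t : ℝ}
    (ht : t ≤ T) : IntegrableOn (fun s => S (t - s) (f s)) (Ioo 0 t) := by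
  -- `S (max r 0)` extends `S` to all times; uniform boundedness makes it jointly continuous
  have hSext : Continuous fun q : ℝ × E => S (max q.1 0) q.2 :=
    continuous_uncurry_apply_of_norm_le (fun x => (hScont x).comp_continuous
      (continuous_id.max continuous_const) fun r => le_max_right r 0)
      fun r => hSbound _ (le_max_right r 0)
  refine (integrable_apply_of_norm_le hSext (fun r => hSbound _ (le_max_right r 0))
    (continuous_sub_left t).aestronglyMeasurable (hf.mono_set (Ioo_subset_Ioo_right ht))).congr ?_
  filter_upwards [ae_restrict_mem measurableSet_Ioo] with s hs
  rw [max_eq_left (sub_nonneg.2 hs.2.le)]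

variable (hw : ∀ t, 0 ≤ w t)
  (hk : ∀ s t, s < t → ∀ x, w t * ‖S (t - s) x‖ ≤ k (t - s) * (w s * ‖x‖))
include hw hk

theorem ofReal_mul_norm_duhamel_le {t : ℝ} (ht : t ≤ T) :
    ENNReal.ofReal (w t * ‖∫ s in Ioo 0 t, S (t - s) (f s)‖)
      ≤ ∫⁻ s, (Ioi 0).indicator (fun r => ENNReal.ofReal (k r)) (t - s)
          * (Ioo 0 T).indicator (fun s => ENNReal.ofReal (w s * ‖f s‖)) s := by
  have hintegrand : ∀ s ∈ Ioo 0 t, ENNReal.ofReal (w t) * ‖S (t - s) (f s)‖ₑ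
      ≤ (Ioi 0).indicator (fun r => ENNReal.ofReal (k r)) (t - s)
          * (Ioo 0 T).indicator (fun s => ENNReal.ofReal (w s * ‖f s‖)) s := by
    intro s hs
    rw [indicator_of_mem (show t - s ∈ Ioi 0 from sub_pos.2 hs.2),
      indicator_of_mem (show s ∈ Ioo 0 T from ⟨hs.1, hs.2.trans_le ht⟩), ← ofReal_norm,
      ← ENNReal.ofReal_mul (hw t), ← ENNReal.ofReal_mul' (mul_nonneg (hw s) (norm_nonneg _))]
    exact ENNReal.ofReal_le_ofReal (hk s t hs.2 _)
  calc ENNReal.ofReal (w t * ‖∫ s in Ioo 0 t, S (t - s) (f s)‖)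
      = ENNReal.ofReal (w t) * ‖∫ s in Ioo 0 t, S (t - s) (f s)‖ₑ := by
        rw [ENNReal.ofReal_mul (hw t), ofReal_norm]
    _ ≤ ENNReal.ofReal (w t) * ∫⁻ s in Ioo 0 t, ‖S (t - s) (f s)‖ₑ := by
        gcongr; exact enorm_integral_le_lintegral_enorm _
    _ = ∫⁻ s in Ioo 0 t, ENNReal.ofReal (w t) * ‖S (t - s) (f s)‖ₑ :=
        (lintegral_const_mul' _ _ ENNReal.ofReal_ne_top).symm
    _ ≤ _ := (setLIntegral_mono' measurableSet_Ioo hintegrand).trans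
        (setLIntegral_le_lintegral _ _)

theorem lintegral_mul_norm_duhamel_rpow_le {p : ℝ} (hp : 1 ≤ p) (hw_meas : Measurable w)
    (hk_meas : Measurable k) (hf : AEStronglyMeasurable f (volume.restrict (Ioo 0 T))) :
    ∫⁻ t in Ioo 0 T, ENNReal.ofReal (w t * ‖∫ s in Ioo 0 t, S (t - s) (f s)‖) ^ p
      ≤ (∫⁻ r in Ioi 0, ENNReal.ofReal (k r)) ^ p
          * ∫⁻ t in Ioo 0 T, ENNReal.ofReal (w t * ‖f t‖) ^ p := by
  have hp0 : 0 < p := zero_lt_one.trans_le hp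
  calc ∫⁻ t in Ioo 0 T, ENNReal.ofReal (w t * ‖∫ s in Ioo 0 t, S (t - s) (f s)‖) ^ p
      ≤ ∫⁻ t, (∫⁻ s, (Ioi 0).indicator (fun r => ENNReal.ofReal (k r)) (t - s)
          * (Ioo 0 T).indicator (fun s => ENNReal.ofReal (w s * ‖f s‖)) s) ^ p :=
        (setLIntegral_mono' measurableSet_Ioo fun t ht => ENNReal.rpow_le_rpow
          (ofReal_mul_norm_duhamel_le hw hk ht.2.le) hp0.le).trans (setLIntegral_le_lintegral _ _)
    _ ≤ (∫⁻ r, (Ioi 0).indicator (fun r => ENNReal.ofReal (k r)) r) ^ p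
          * ∫⁻ t, (Ioo 0 T).indicator (fun s => ENNReal.ofReal (w s * ‖f s‖)) t ^ p :=
        lintegral_convolution_rpow_le volume hp
          (hk_meas.ennreal_ofReal.indicator measurableSet_Ioi)
          ((aemeasurable_indicator_iff measurableSet_Ioo).2
            (hw_meas.aemeasurable.mul hf.norm.aemeasurable).ennreal_ofReal)
    _ = _ := by
        rw [lintegral_indicator measurableSet_Ioi, ← lintegral_indicator measurableSet_Ioo]
        congr 2 with t
        exact congr_fun
          (indicator_comp_of_zero (g := (· ^ p)) (ENNReal.zero_rpow_of_pos hp0)).symm t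

theorem weighted_duhamel_estimate {p C : ℝ} (hp : 1 ≤ p) (hw_meas : Measurable w)
    (hk_meas : Measurable k) (hC : ∫⁻ r in Ioi 0, ENNReal.ofReal (k r) ≤ ENNReal.ofReal C)
    (hC0 : 0 ≤ C) (hf : AEStronglyMeasurable f (volume.restrict (Ioo 0 T)))
    (hfp : IntegrableOn (fun t => (w t * ‖f t‖) ^ p) (Ioo 0 T)) :
    (∫ t in Ioo 0 T, (w t * ‖∫ s in Ioo 0 t, S (t - s) (f s)‖) ^ p) ^ (1 / p)
      ≤ C * (∫ t in Ioo 0 T, (w t * ‖f t‖) ^ p) ^ (1 / p) :=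
  rpow_integral_rpow_le_mul_of_lintegral_le (zero_lt_one.trans_le hp)
    (fun t => mul_nonneg (hw t) (norm_nonneg _)) (fun t => mul_nonneg (hw t) (norm_nonneg _)) hC0
    hfp <| (lintegral_mul_norm_duhamel_rpow_le hw hk hp hw_meas hk_meas hf).trans <| by
      gcongr

end Duhamel

theorem stmt_0_general
    (E : Type*) [NormedAddCommGroup E] [NormedSpace ℝ E]
    (M lam : ℝ) (hM : 0 < M) (hlam : 0 < lam)
    (S : ℝ → E →L[ℝ] E)
    (hScont : ∀ x : E, ContinuousOn (fun t => S t x) (Set.Ici 0))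
    (hSbound : ∀ t : ℝ, 0 ≤ t → ∀ x : E, ‖S t x‖ ≤ M * Real.exp (-lam * t) * ‖x‖)
    (p : ℝ) (hp : 1 < p) (b : ℝ) (hb : 0 ≤ b) :
    ∃ C > 0, ∀ T : ℝ, 0 < T → ∀ f : ℝ → E,
      AEStronglyMeasurable f (volume.restrict (Ioo 0 T)) →
      IntegrableOn (fun t => (Real.sqrt (1 + t ^ 2) ^ b * ‖f t‖) ^ p) (Ioo 0 T) →
      (∀ᵐ t ∂(volume.restrict (Ioo 0 T)),
          IntegrableOn (fun s => S (t - s) (f s)) (Ioo 0 t)) ∧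
      (∫ t in Ioo (0:ℝ) T,
          (Real.sqrt (1 + t ^ 2) ^ b * ‖∫ s in Ioo 0 t, S (t - s) (f s)‖) ^ p) ^ (1 / p)
        ≤ C * (∫ t in Ioo (0:ℝ) T,
            (Real.sqrt (1 + t ^ 2) ^ b * ‖f t‖) ^ p) ^ (1 / p) := by
  obtain ⟨K, hK, hweight⟩ := sqrt_one_add_sq_rpow_mul_exp_le hb hlam
  have hkernel : ∀ s t, s < t → ∀ x, √(1 + t ^ 2) ^ b * ‖S (t - s) x‖
      ≤ M * K * Real.exp (-(lam / 2) * (t - s)) * (√(1 + s ^ 2) ^ b * ‖x‖) := fun s t hst x =>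
    calc √(1 + t ^ 2) ^ b * ‖S (t - s) x‖
        ≤ √(1 + t ^ 2) ^ b * (M * Real.exp (-lam * (t - s)) * ‖x‖) := by
          gcongr; exact hSbound _ (sub_nonneg.2 hst.le) x
      _ = M * ‖x‖ * (√(1 + t ^ 2) ^ b * Real.exp (-lam * (t - s))) := by ring
      _ ≤ M * ‖x‖ * (K * Real.exp (-(lam / 2) * (t - s)) * √(1 + s ^ 2) ^ b) :=
          mul_le_mul_of_nonneg_left (hweight s t hst.le) (by positivity)
      _ = _ := by ring
  have hSle : ∀ t, 0 ≤ t → ∀ x, ‖S t x‖ ≤ M * ‖x‖ := fun t ht x =>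
    (hSbound t ht x).trans <| by
      gcongr
      exact mul_le_of_le_one_right hM.le (Real.exp_le_one_iff.2 (by nlinarith))
  refine ⟨M * K / (lam / 2), by positivity, fun T _ f hf hfp => ⟨?_, ?_⟩⟩
  · have hfT : IntegrableOn f (Ioo 0 T) := integrable_of_integrable_mul_norm_rpow hp.le
      (fun t => Real.one_le_rpow (Real.one_le_sqrt.2 (by nlinarith)) hb) hf hfp
    filter_upwards [ae_restrict_mem measurableSet_Ioo] with t ht
    exact integrableOn_duhamel hScont hSle hfT ht.2.le
  · exact weighted_duhamel_estimate (w := fun t => √(1 + t ^ 2) ^ b) (fun t => by positivity)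
      hkernel hp.le (by fun_prop) (by fun_prop)
      (lintegral_Ioi_ofReal_mul_exp_neg (half_pos hlam) (by positivity)).le (by positivity) hf hfp

/-- Weighted maximal-in-time estimate for the Duhamel integral associated with an
exponentially decaying strongly continuous operator family, with a constant
independent of the time horizon `T` (estimate (5.6) of the paper). -/
theorem stmt_0
    (E : Type*) [NormedAddCommGroup E] [NormedSpace ℝ E] [CompleteSpace E]
    (M lam : ℝ) (hM : 0 < M) (hlam : 0 < lam)
    (S : ℝ → E →L[ℝ] E)
    (hScont : ∀ x : E, ContinuousOn (fun t => S t x) (Set.Ici 0))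
    (hSbound : ∀ t : ℝ, 0 ≤ t → ∀ x : E, ‖S t x‖ ≤ M * Real.exp (-lam * t) * ‖x‖)
    (p : ℝ) (hp : 1 < p) (b : ℝ) (hb : 0 ≤ b)
    (hbp : 1 < b * (p / (p - 1))) :
    ∃ C > 0, ∀ T : ℝ, 0 < T → ∀ f : ℝ → E,
      AEStronglyMeasurable f (volume.restrict (Ioo 0 T)) →
      IntegrableOn (fun t => (Real.sqrt (1 + t ^ 2) ^ b * ‖f t‖) ^ p) (Ioo 0 T) →
      (∀ᵐ t ∂(volume.restrict (Ioo 0 T)),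
          IntegrableOn (fun s => S (t - s) (f s)) (Ioo 0 t)) ∧
      (∫ t in Ioo (0:ℝ) T,
          (Real.sqrt (1 + t ^ 2) ^ b * ‖∫ s in Ioo 0 t, S (t - s) (f s)‖) ^ p) ^ (1 / p)
        ≤ C * (∫ t in Ioo (0:ℝ) T,
            (Real.sqrt (1 + t ^ 2) ^ b * ‖f t‖) ^ p) ^ (1 / p) :=
  stmt_0_general E M lam hM hlam S hScont hSbound p hp b hb
end

section
/- Let λ > 0, 1 < p < ∞, and b ≥ 0. There is a constant C = C(λ, p, b) such that for every measurable h : ℝ → ℝ with (∫_ℝ (⟨t⟩^b |h(t)|)^p dt)^{1/p} < ∞, the function g(t) := ∫_{−∞}^t e^{−λ(t−s)} h(s) ds is defined for every t ∈ ℝ, is locally absolutely continuous, solves g'(t) + λ g(t) = h(t) for almost every t ∈ ℝ, and satisfies (∫_ℝ (⟨t⟩^b |g(t)|)^p dt)^{1/p} + (∫_ℝ (⟨t⟩^b |g'(t)|)^p dt)^{1/p} ≤ C (∫_ℝ (⟨t⟩^b |h(t)|)^p dt)^{1/p}. -/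
/-!
Peetre's inequality `⟨t⟩ ^ b ≤ √2 ^ b * ⟨t - s⟩ ^ b * ⟨s⟩ ^ b` moves the weight inside the
Duhamel integral `g t = ∫ s in Iio t, exp (-λ (t - s)) * h s`: the function `⟨t⟩ ^ b * |g t|` is
dominated by the convolution of `⟨·⟩ ^ b * |h|` with the kernel `√2 ^ b * exp (-λ u) * ⟨u⟩ ^ b`
on `u > 0`, which is integrable since `λ > 0`. Young's inequality `‖F ⋆ k‖_p ≤ ‖F‖_p * ‖k‖_1`
then bounds the weighted norm of `g`, and Minkowski's inequality that of `g' = h - λ g`.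

Writing `g t = exp (-λ t) * (exp (λ a) * g a + ∫ s in a..t, exp (λ s) * h s)` exhibits `g` as
absolutely continuous on every interval, with derivative `h - λ g` almost everywhere by the
Lebesgue differentiation theorem; the fundamental theorem of calculus for absolutely continuous
functions gives the integral identity.
-/

open MeasureTheory Set Real

open scoped ENNReal

theorem rpow_lintegral_mul_le {α : Type*} [MeasurableSpace α] {μ : Measure α} {p : ℝ}
    (hp : 1 ≤ p) {w f : α → ℝ≥0∞} (hw : AEMeasurable w μ) (hf : AEMeasurable f μ) :
    (∫⁻ x, w x * f x ∂μ) ^ p ≤ (∫⁻ x, w x ∂μ) ^ (p - 1) * ∫⁻ x, w x * f x ^ p ∂μ := by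
  have hp0 : 0 < p := by linarith
  have hq : 0 ≤ 1 - 1 / p := by rw [sub_nonneg, div_le_one hp0]; exact hp
  have h_split (x : α) : w x * f x = w x ^ (1 - 1 / p) * (w x * f x ^ p) ^ (1 / p) := by
    rw [ENNReal.mul_rpow_of_nonneg _ _ (by positivity), ← ENNReal.rpow_mul,
      mul_one_div_cancel hp0.ne', ENNReal.rpow_one, ← mul_assoc,
      ← ENNReal.rpow_add_of_nonneg _ _ hq (by positivity), sub_add_cancel, ENNReal.rpow_one]
  have holder := ENNReal.lintegral_mul_norm_pow_le hw (hw.mul (hf.pow_const p)) hq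
    (by positivity) (sub_add_cancel 1 (1 / p))
  simp only [Pi.mul_apply, ← h_split] at holder
  calc (∫⁻ x, w x * f x ∂μ) ^ p
      ≤ ((∫⁻ x, w x ∂μ) ^ (1 - 1 / p) * (∫⁻ x, w x * f x ^ p ∂μ) ^ (1 / p)) ^ p :=
        ENNReal.rpow_le_rpow holder hp0.le
    _ = (∫⁻ x, w x ∂μ) ^ (p - 1) * ∫⁻ x, w x * f x ^ p ∂μ := by
        rw [ENNReal.mul_rpow_of_nonneg _ _ hp0.le, ← ENNReal.rpow_mul, ← ENNReal.rpow_mul,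
          one_div_mul_cancel hp0.ne', ENNReal.rpow_one, sub_mul, one_mul,
          one_div_mul_cancel hp0.ne']

section Young

variable {G : Type*} [MeasurableSpace G] [AddCommGroup G] [MeasurableAdd₂ G] [MeasurableNeg G]
  {μ : Measure G} [SFinite μ] [μ.IsAddLeftInvariant] [μ.IsNegInvariant]

theorem lintegral_rpow_lconvolution_le {p : ℝ} (hp : 1 ≤ p) {f g : G → ℝ≥0∞}
    (hf : Measurable f) (hg : Measurable g) :
    ∫⁻ x, (f ⋆ₗ[μ] g) x ^ p ∂μ ≤ (∫⁻ x, f x ^ p ∂μ) * (∫⁻ x, g x ∂μ) ^ p := by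
  set A := ∫⁻ x, g x ∂μ
  have hg_neg_add (x : G) : ∫⁻ y, g (-y + x) ∂μ = A := by
    rw [lintegral_neg_eq_self (fun y => g (y + x)), lintegral_add_right_eq_self]
  have hF : Measurable fun z : G × G => g (-z.2 + z.1) * f z.2 ^ p := by fun_prop
  calc ∫⁻ x, (f ⋆ₗ[μ] g) x ^ p ∂μ
      ≤ ∫⁻ x, A ^ (p - 1) * ∫⁻ y, g (-y + x) * f y ^ p ∂μ ∂μ := by
        refine lintegral_mono fun x => ?_
        simp only [lconvolution_def, mul_comm (f _)]
        rw [← hg_neg_add x]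
        exact rpow_lintegral_mul_le hp (by fun_prop) hf.aemeasurable
    _ = A ^ (p - 1) * ∫⁻ y, A * f y ^ p ∂μ := by
        rw [lintegral_const_mul _ hF.lintegral_prod_right',
          lintegral_lintegral_swap hF.aemeasurable]
        congr 1
        refine lintegral_congr fun y => ?_
        dsimp only
        rw [lintegral_mul_const _ (by fun_prop : Measurable fun x => g (-y + x)),
          lintegral_add_left_eq_self]
    _ = (∫⁻ x, f x ^ p ∂μ) * A ^ p := by
        have hA : A ^ (p - 1) * A = A ^ p := by
          simpa using
            (ENNReal.rpow_add_of_nonneg (x := A) (p - 1) 1 (sub_nonneg.2 hp) zero_le_one).symm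
        rw [lintegral_const_mul _ (hf.pow_const p), ← mul_assoc, hA, mul_comm]

theorem eLpNorm_lconvolution_le {p : ℝ≥0∞} (hp : 1 ≤ p) (hp_top : p ≠ ∞) {f g : G → ℝ≥0∞}
    (hf : Measurable f) (hg : Measurable g) :
    eLpNorm (f ⋆ₗ[μ] g) p μ ≤ eLpNorm f p μ * ∫⁻ x, g x ∂μ := by
  have hp_real : 1 ≤ p.toReal := by simpa using ENNReal.toReal_mono hp_top hp
  have hp0 : 0 < p.toReal := one_pos.trans_le hp_real
  simp only [eLpNorm_eq_lintegral_rpow_enorm_toReal (one_pos.trans_le hp).ne' hp_top,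
    enorm_eq_self]
  calc (∫⁻ x, (f ⋆ₗ[μ] g) x ^ p.toReal ∂μ) ^ (1 / p.toReal)
      ≤ ((∫⁻ x, f x ^ p.toReal ∂μ) * (∫⁻ x, g x ∂μ) ^ p.toReal) ^ (1 / p.toReal) :=
        ENNReal.rpow_le_rpow (lintegral_rpow_lconvolution_le hp_real hf hg) (by positivity)
    _ = (∫⁻ x, f x ^ p.toReal ∂μ) ^ (1 / p.toReal) * ∫⁻ x, g x ∂μ := by
        rw [ENNReal.mul_rpow_of_nonneg _ _ (by positivity), ← ENNReal.rpow_mul,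
          mul_one_div_cancel hp0.ne', ENNReal.rpow_one]

end Young

section WeightedLp

variable {α : Type*} [MeasurableSpace α] {μ : Measure α} {p : ℝ} {ω f : α → ℝ}

lemma memLp_mul_of_integrable_rpow (hp : 0 < p) (hω : ∀ x, 0 ≤ ω x)
    (hf : AEStronglyMeasurable (fun x => ω x * f x) μ)
    (h_int : Integrable (fun x => (ω x * |f x|) ^ p) μ) :
    MemLp (fun x => ω x * f x) (ENNReal.ofReal p) μ := by
  rw [← integrable_norm_rpow_iff hf (by simpa using hp) ENNReal.ofReal_ne_top,
    ENNReal.toReal_ofReal hp.le]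
  simpa only [norm_mul, norm_of_nonneg (hω _), Real.norm_eq_abs] using h_int

lemma lpNorm_mul_eq_integral_rpow (hp : 0 < p) (hω : ∀ x, 0 ≤ ω x)
    (hf : AEStronglyMeasurable (fun x => ω x * f x) μ) :
    lpNorm (fun x => ω x * f x) (ENNReal.ofReal p) μ = (∫ x, (ω x * |f x|) ^ p ∂μ) ^ (1 / p) := by
  rw [lpNorm_eq_integral_norm_rpow_toReal (by simpa using hp) ENNReal.ofReal_ne_top hf,
    ENNReal.toReal_ofReal hp.le, one_div]
  simp only [norm_mul, norm_of_nonneg (hω _), Real.norm_eq_abs]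

end WeightedLp

noncomputable def timeWeight (b t : ℝ) : ℝ := √(1 + t ^ 2) ^ b

section TimeWeight

variable {b : ℝ}

lemma timeWeight_nonneg (b t : ℝ) : 0 ≤ timeWeight b t := by unfold timeWeight; positivity

lemma one_le_timeWeight (hb : 0 ≤ b) (t : ℝ) : 1 ≤ timeWeight b t :=
  one_le_rpow (one_le_sqrt.2 (by nlinarith)) hb

@[fun_prop]
lemma measurable_timeWeight (b : ℝ) : Measurable (timeWeight b) := by
  unfold timeWeight; fun_prop

lemma timeWeight_le_mul_timeWeight_sub (hb : 0 ≤ b) (t s : ℝ) :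
    timeWeight b t ≤ √2 ^ b * (timeWeight b (t - s) * timeWeight b s) := by
  simp only [timeWeight]
  rw [← mul_rpow (by positivity) (by positivity), ← mul_rpow (by positivity) (by positivity),
    ← sqrt_mul (by positivity), ← sqrt_mul (by positivity)]
  gcongr
  nlinarith [sq_nonneg (t - 2 * s), sq_nonneg (s * (t - s))]

lemma timeWeight_le_two_rpow_mul (hb : 0 ≤ b) {u : ℝ} (hu : 0 ≤ u) :
    timeWeight b u ≤ 2 ^ b * (1 + u ^ b) := by
  have h_bracket : √(1 + u ^ 2) ≤ 1 + u := sqrt_le_iff.2 ⟨by positivity, by nlinarith⟩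
  calc timeWeight b u ≤ (1 + u) ^ b := rpow_le_rpow (by positivity) h_bracket hb
    _ ≤ 2 ^ b * (1 + u ^ b) := by
        rcases le_total u 1 with hu1 | hu1
        · calc (1 + u) ^ b ≤ 2 ^ b := rpow_le_rpow (by positivity) (by linarith) hb
            _ ≤ 2 ^ b * (1 + u ^ b) :=
                le_mul_of_one_le_right (by positivity) (le_add_of_nonneg_right (by positivity))
        · calc (1 + u) ^ b ≤ (2 * u) ^ b := rpow_le_rpow (by positivity) (by linarith) hb
            _ ≤ 2 ^ b * (1 + u ^ b) := by
                rw [mul_rpow (by norm_num) hu]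
                gcongr
                linarith

lemma integrableOn_exp_mul_timeWeight {lam : ℝ} (hlam : 0 < lam) (hb : 0 ≤ b) :
    IntegrableOn (fun u => exp (-lam * u) * timeWeight b u) (Ioi 0) := by
  have h_pow : IntegrableOn (fun u : ℝ => u ^ b * exp (-lam * u)) (Ioi 0) := by
    simpa using integrableOn_rpow_mul_exp_neg_mul_rpow (by linarith) zero_lt_one hlam
  have h_exp : IntegrableOn (fun u : ℝ => exp (-lam * u)) (Ioi 0) :=
    integrableOn_exp_mul_Ioi (by linarith) 0
  refine ((h_exp.add h_pow).const_mul (2 ^ b)).mono' (by fun_prop) ?_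
  filter_upwards [ae_restrict_mem measurableSet_Ioi] with u (hu : 0 < u)
  rw [norm_of_nonneg (mul_nonneg (exp_nonneg _) (timeWeight_nonneg b u))]
  calc exp (-lam * u) * timeWeight b u ≤ exp (-lam * u) * (2 ^ b * (1 + u ^ b)) :=
        mul_le_mul_of_nonneg_left (timeWeight_le_two_rpow_mul hb hu.le) (exp_nonneg _)
    _ = 2 ^ b * (exp (-lam * u) + u ^ b * exp (-lam * u)) := by ring

lemma memLp_of_memLp_timeWeight_mul (hb : 0 ≤ b) {p : ℝ≥0∞} {f : ℝ → ℝ}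
    (hf : AEStronglyMeasurable f) (hWf : MemLp (fun t => timeWeight b t * f t) p) : MemLp f p :=
  hWf.of_le hf (.of_forall fun t => by
    rw [norm_mul, norm_of_nonneg (timeWeight_nonneg b t)]
    exact le_mul_of_one_le_left (norm_nonneg _) (one_le_timeWeight hb t))

end TimeWeight

noncomputable def duhamel (lam : ℝ) (h : ℝ → ℝ) (t : ℝ) : ℝ :=
  ∫ s in Iio t, exp (-lam * (t - s)) * h s

section Duhamel

variable {lam : ℝ} {h : ℝ → ℝ}

lemma integrableOn_Iio_exp_mul_of_memLp (hlam : 0 < lam) {p : ℝ} (hp : 1 < p)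
    (hh : MemLp h (ENNReal.ofReal p)) (t : ℝ) :
    IntegrableOn (fun s => exp (-lam * (t - s)) * h s) (Iio t) := by
  set q := p.conjExponent
  have hpq : p.HolderConjugate q := .conjExponent hp
  have : ENNReal.HolderTriple (ENNReal.ofReal q) (ENNReal.ofReal p) 1 := hpq.symm.ennrealOfReal
  have h_exp : MemLp (fun s => exp (-lam * (t - s))) (ENNReal.ofReal q)
      (volume.restrict (Iio t)) := by
    rw [← integrable_norm_rpow_iff (by fun_prop) (by simpa using hpq.symm.pos)
      ENNReal.ofReal_ne_top, ENNReal.toReal_ofReal hpq.symm.nonneg]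
    have : IntegrableOn (fun s => exp (-(q * lam) * t) * exp (q * lam * s)) (Iio t) :=
      ((integrableOn_exp_mul_Iic (mul_pos hpq.symm.pos hlam) t).mono_set
        Iio_subset_Iic_self).const_mul _
    refine this.congr_fun (fun s _ => ?_) measurableSet_Iio
    dsimp only
    rw [norm_of_nonneg (exp_nonneg _), ← exp_mul, ← exp_add]
    ring_nf
  exact h_exp.integrable_mul (hh.restrict _)

variable (hint : ∀ t, IntegrableOn (fun s => exp (-lam * (t - s)) * h s) (Iio t))
include hint

lemma integrableOn_Iic_exp_mul (x : ℝ) : IntegrableOn (fun s => exp (lam * s) * h s) (Iic x) := by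
  rw [integrableOn_Iic_iff_integrableOn_Iio]
  refine IntegrableOn.congr_fun ((hint x).const_mul (exp (lam * x))) (fun s _ => ?_)
    measurableSet_Iio
  rw [← mul_assoc, ← exp_add]
  ring_nf

lemma locallyIntegrable_exp_mul : LocallyIntegrable (fun s => exp (lam * s) * h s) := by
  refine locallyIntegrable_iff.2 fun k hk => ?_
  obtain ⟨x, hx⟩ := hk.bddAbove
  exact (integrableOn_Iic_exp_mul hint x).mono_set hx

lemma duhamel_eq_exp_mul (a t : ℝ) : duhamel lam h t =
    exp (-lam * t) * (exp (lam * a) * duhamel lam h a + ∫ s in a..t, exp (lam * s) * h s) := by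
  have h_factor (x : ℝ) :
      duhamel lam h x = exp (-lam * x) * ∫ s in Iio x, exp (lam * s) * h s := by
    rw [duhamel, ← integral_const_mul]
    congr 1 with s
    rw [← mul_assoc, ← exp_add]
    ring_nf
  rw [h_factor t, h_factor a, ← intervalIntegral.integral_Iic_sub_Iic
    (integrableOn_Iic_exp_mul hint a) (integrableOn_Iic_exp_mul hint t),
    integral_Iic_eq_integral_Iio, integral_Iic_eq_integral_Iio, ← mul_assoc, ← exp_add]
  simp

lemma continuous_duhamel : Continuous (duhamel lam h) := by
  rw [funext (duhamel_eq_exp_mul hint 0)]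
  have := intervalIntegral.continuous_primitive (fun a b =>
    ((locallyIntegrable_exp_mul hint).integrableOn_isCompact isCompact_uIcc).intervalIntegrable) 0
  fun_prop

lemma ae_hasDerivAt_duhamel : ∀ᵐ x, HasDerivAt (duhamel lam h) (h x - lam * duhamel lam h x) x := by
  filter_upwards [_root_.LocallyIntegrable.ae_hasDerivAt_integral (locallyIntegrable_exp_mul hint)]
    with x hx
  have h_exp : HasDerivAt (fun t => exp (-lam * t)) (exp (-lam * x) * -lam) x := by
    simpa using ((hasDerivAt_id x).const_mul (-lam)).exp
  have h_inv : exp (-lam * x) * exp (lam * x) = 1 := by rw [← exp_add]; ring_nf; exact exp_zero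
  refine ((h_exp.mul ((hx 0).const_add _)).congr_deriv ?_).congr_of_eventuallyEq
    (.of_forall (duhamel_eq_exp_mul hint 0))
  rw [duhamel_eq_exp_mul hint 0 x]
  linear_combination h x * h_inv

lemma absolutelyContinuousOnInterval_duhamel (a c : ℝ) :
    AbsolutelyContinuousOnInterval (duhamel lam h) a c := by
  have h_primitive := ((locallyIntegrable_exp_mul hint).integrableOn_isCompact
    isCompact_uIcc).intervalIntegrable.absolutelyContinuousOnInterval_intervalIntegral
      (left_mem_uIcc (a := a) (b := c))
  rw [funext (duhamel_eq_exp_mul hint a)]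
  exact (by fun_prop : ContDiff ℝ 1 fun t => exp (-lam * t)).contDiffOn
    |>.absolutelyContinuousOnInterval.fun_mul
      (contDiffOn_const.absolutelyContinuousOnInterval.add h_primitive)

lemma integral_sub_mul_duhamel (a c : ℝ) :
    ∫ s in a..c, (h s - lam * duhamel lam h s) = duhamel lam h c - duhamel lam h a := by
  rw [← (absolutelyContinuousOnInterval_duhamel hint a c).integral_deriv_eq_sub]
  refine intervalIntegral.integral_congr_ae ?_
  filter_upwards [ae_hasDerivAt_duhamel hint] with x hx _
  exact hx.deriv.symm

end Duhamel

noncomputable def duhamelKernel (lam b : ℝ) : ℝ → ℝ :=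
  (Ioi 0).indicator fun u => √2 ^ b * (exp (-lam * u) * timeWeight b u)

section WeightedBound

variable {lam b : ℝ} {h : ℝ → ℝ}

lemma integrable_duhamelKernel (hlam : 0 < lam) (hb : 0 ≤ b) :
    Integrable (duhamelKernel lam b) :=
  (integrable_indicator_iff measurableSet_Ioi).2
    ((integrableOn_exp_mul_timeWeight hlam hb).const_mul _)

lemma measurable_duhamelKernel (lam b : ℝ) : Measurable (duhamelKernel lam b) :=
  (by fun_prop : Measurable fun u => √2 ^ b * (exp (-lam * u) * timeWeight b u)).indicator
    measurableSet_Ioi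

lemma enorm_timeWeight_mul_duhamel_le (hb : 0 ≤ b) (t : ℝ) :
    ‖timeWeight b t * duhamel lam h t‖ₑ ≤
      ((fun s => ‖timeWeight b s * h s‖ₑ) ⋆ₗ fun u => ‖duhamelKernel lam b u‖ₑ) t := by
  calc ‖timeWeight b t * duhamel lam h t‖ₑ
      ≤ ‖timeWeight b t‖ₑ * ∫⁻ s in Iio t, ‖exp (-lam * (t - s)) * h s‖ₑ := by
        rw [enorm_mul]
        exact mul_le_mul_right (enorm_integral_le_lintegral_enorm _) _
    _ = ∫⁻ s in Iio t, ‖timeWeight b t * (exp (-lam * (t - s)) * h s)‖ₑ := by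
        rw [← lintegral_const_mul' _ _ enorm_ne_top]
        simp_rw [enorm_mul]
    _ ≤ ∫⁻ s in Iio t, ‖timeWeight b s * h s‖ₑ * ‖duhamelKernel lam b (-s + t)‖ₑ := by
        refine setLIntegral_mono' measurableSet_Iio fun s (hs : s < t) => ?_
        rw [← enorm_mul, enorm_le_iff_norm_le, neg_add_eq_sub, duhamelKernel,
          indicator_of_mem (show t - s ∈ Ioi 0 from sub_pos.2 hs)]
        simp only [norm_mul, norm_of_nonneg (exp_nonneg _), norm_of_nonneg (timeWeight_nonneg b _),
          norm_of_nonneg (rpow_nonneg (sqrt_nonneg 2) b)]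
        calc timeWeight b t * (exp (-lam * (t - s)) * ‖h s‖)
            ≤ √2 ^ b * (timeWeight b (t - s) * timeWeight b s) * (exp (-lam * (t - s)) * ‖h s‖) :=
              mul_le_mul_of_nonneg_right (timeWeight_le_mul_timeWeight_sub hb t s) (by positivity)
          _ = _ := by ring
    _ ≤ _ := setLIntegral_le_lintegral _ _

lemma lpNorm_timeWeight_mul_duhamel_le (hlam : 0 < lam) (hb : 0 ≤ b) (hh : Measurable h)
    (hint : ∀ t, IntegrableOn (fun s => exp (-lam * (t - s)) * h s) (Iio t)) {p : ℝ≥0∞}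
    (hp : 1 ≤ p) (hp_top : p ≠ ∞) (hWh : MemLp (fun t => timeWeight b t * h t) p) :
    lpNorm (fun t => timeWeight b t * duhamel lam h t) p volume ≤
      (∫⁻ u, ‖duhamelKernel lam b u‖ₑ).toReal *
        lpNorm (fun t => timeWeight b t * h t) p volume := by
  have h_young := eLpNorm_lconvolution_le (μ := volume) hp hp_top
    (by fun_prop : Measurable fun t => ‖timeWeight b t * h t‖ₑ)
    (measurable_duhamelKernel lam b).enorm
  rw [eLpNorm_enorm] at h_young
  have h_bound := (eLpNorm_mono_enorm (p := p) (μ := volume) fun t =>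
    (enorm_timeWeight_mul_duhamel_le (lam := lam) (h := h) hb t).trans_eq
      (enorm_eq_self _).symm).trans h_young
  have hWg : AEStronglyMeasurable (fun t => timeWeight b t * duhamel lam h t) :=
    ((measurable_timeWeight b).mul (continuous_duhamel hint).measurable).aestronglyMeasurable
  rw [← toReal_eLpNorm hWg, ← toReal_eLpNorm hWh.1, mul_comm, ← ENNReal.toReal_mul]
  exact ENNReal.toReal_mono (ENNReal.mul_ne_top hWh.2.ne (integrable_duhamelKernel hlam hb).2.ne)
    h_bound

lemma lpNorm_timeWeight_mul_duhamel_add_le (hlam : 0 < lam) (hb : 0 ≤ b) (hh : Measurable h)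
    (hint : ∀ t, IntegrableOn (fun s => exp (-lam * (t - s)) * h s) (Iio t)) {p : ℝ≥0∞}
    (hp : 1 ≤ p) (hp_top : p ≠ ∞) (hWh : MemLp (fun t => timeWeight b t * h t) p) :
    lpNorm (fun t => timeWeight b t * duhamel lam h t) p volume +
        lpNorm (fun t => timeWeight b t * (h t - lam * duhamel lam h t)) p volume ≤
      (1 + (1 + lam) * (∫⁻ u, ‖duhamelKernel lam b u‖ₑ).toReal) *
        lpNorm (fun t => timeWeight b t * h t) p volume := by
  have hWg := lpNorm_timeWeight_mul_duhamel_le hlam hb hh hint hp hp_top hWh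
  have hWg' := lpNorm_sub_le hWh (g := lam • fun t => timeWeight b t * duhamel lam h t) hp
  rw [lpNorm_const_smul, coe_nnnorm, norm_of_nonneg hlam.le] at hWg'
  rw [show (fun t => timeWeight b t * (h t - lam * duhamel lam h t)) =
      (fun t => timeWeight b t * h t) - lam • fun t => timeWeight b t * duhamel lam h t by
        ext t; simp only [Pi.sub_apply, Pi.smul_apply, smul_eq_mul]; ring]
  have := mul_le_mul_of_nonneg_left hWg hlam.le
  nlinarith [lpNorm_nonneg (f := fun t => timeWeight b t * h t) (p := p) (μ := volume)]

end WeightedBound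

/-- Scalar core of Theorem 3.5 of the paper: weighted maximal regularity for the
shifted ODE `g' + λ g = h` on the whole time line, with `g` given by the causal
convolution `g(t) = ∫_{-∞}^t e^{-λ(t-s)} h(s) ds`.  Local absolute continuity of `g`
is expressed through the fundamental theorem of calculus representation with a
locally integrable derivative `g'`. -/
theorem stmt_1 (lam : ℝ) (hlam : 0 < lam) (p : ℝ) (hp : 1 < p) (b : ℝ) (hb : 0 ≤ b) :
    ∃ C > 0, ∀ h : ℝ → ℝ, Measurable h →
      Integrable (fun t => (Real.sqrt (1 + t ^ 2) ^ b * |h t|) ^ p) →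
      (∀ t : ℝ, IntegrableOn (fun s => Real.exp (-lam * (t - s)) * h s) (Iio t)) ∧
      ∃ g' : ℝ → ℝ, LocallyIntegrable g' volume ∧
        (∀ a c : ℝ,
          (∫ s in a..c, g' s) =
            (∫ s in Iio c, Real.exp (-lam * (c - s)) * h s)
              - ∫ s in Iio a, Real.exp (-lam * (a - s)) * h s) ∧
        (∀ᵐ t : ℝ,
          g' t + lam * (∫ s in Iio t, Real.exp (-lam * (t - s)) * h s) = h t) ∧
        (∫ t : ℝ,
            (Real.sqrt (1 + t ^ 2) ^ b *
              |∫ s in Iio t, Real.exp (-lam * (t - s)) * h s|) ^ p) ^ (1 / p)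
          + (∫ t : ℝ, (Real.sqrt (1 + t ^ 2) ^ b * |g' t|) ^ p) ^ (1 / p)
          ≤ C * (∫ t : ℝ, (Real.sqrt (1 + t ^ 2) ^ b * |h t|) ^ p) ^ (1 / p) := by
  set C₀ := (∫⁻ u, ‖duhamelKernel lam b u‖ₑ).toReal
  refine ⟨1 + (1 + lam) * C₀, by positivity, fun h hh h_int => ?_⟩
  have hp0 : 0 < p := by linarith
  have hP : 1 ≤ ENNReal.ofReal p := by simpa using hp.le
  have hmeas {f : ℝ → ℝ} (hf : Measurable f) :
      AEStronglyMeasurable (fun t => timeWeight b t * f t) :=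
    ((measurable_timeWeight b).mul hf).aestronglyMeasurable
  have hWh := memLp_mul_of_integrable_rpow hp0 (timeWeight_nonneg b) (hmeas hh) h_int
  have hLp := memLp_of_memLp_timeWeight_mul hb hh.aestronglyMeasurable hWh
  have hint := integrableOn_Iio_exp_mul_of_memLp hlam hp hLp
  have hg := continuous_duhamel hint
  refine ⟨hint, fun t => h t - lam * duhamel lam h t,
    (hLp.locallyIntegrable hP).sub (continuous_const.mul hg).locallyIntegrable,
    integral_sub_mul_duhamel hint, .of_forall fun t => sub_add_cancel _ _, ?_⟩
  change (∫ t, (timeWeight b t * |duhamel lam h t|) ^ p) ^ (1 / p)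
      + (∫ t, (timeWeight b t * |h t - lam * duhamel lam h t|) ^ p) ^ (1 / p)
      ≤ (1 + (1 + lam) * C₀) * (∫ t, (timeWeight b t * |h t|) ^ p) ^ (1 / p)
  rw [← lpNorm_mul_eq_integral_rpow hp0 (timeWeight_nonneg b) (hmeas hg.measurable),
    ← lpNorm_mul_eq_integral_rpow hp0 (timeWeight_nonneg b)
      (hmeas (f := fun t => h t - lam * duhamel lam h t) (by fun_prop)),
    ← lpNorm_mul_eq_integral_rpow hp0 (timeWeight_nonneg b) (hmeas hh)]
  exact lpNorm_timeWeight_mul_duhamel_add_le hlam hb hh hint hP ENNReal.ofReal_ne_top hWh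
end

section
/- Let 1 < p < ∞, let p' = p/(p−1), and let b ≥ 0 and ℓ > 1 satisfy bp' > 1 and (ℓ − b)p > 1. Then there is a constant C = C(p, b, ℓ), independent of T, such that for every T ∈ (0,∞) and every measurable h : (0,T) → [0,∞), the function g(t) := ∫_0^t min(1, (t−s)^{−ℓ}) h(s) ds satisfies (∫_0^T (⟨t⟩^b g(t))^p dt)^{1/p} ≤ C (∫_0^T (⟨t⟩^b h(t))^p dt)^{1/p}. -/
/-!
Write `⟨u⟩ = √(1 + u²)` and `f = ⟨·⟩ᵇ h`. From `⟨t⟩ ≤ ⟨s⟩ + ⟨t - s⟩` and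
`min 1 (u ^ (-ℓ)) ≤ 2 ^ (ℓ / 2) ⟨u⟩ ^ (-ℓ)` the weighted kernel is dominated by
`⟨t - s⟩ ^ (-ℓ) ⟨s⟩ ^ b + ⟨t - s⟩ ^ (b - ℓ)`, so up to a constant `⟨t⟩ᵇ g` is bounded by the
convolutions `f ⋆ ⟨·⟩ ^ (-ℓ)` and `h ⋆ ⟨·⟩ ^ (b - ℓ)`, with `f` and `h` extended by zero off
`(0, T)`. Young's inequality with one exponent equal to `1` bounds their `L^p` norms by
`‖⟨·⟩ ^ (-ℓ)‖₁ ‖f‖_p` (finite as `ℓ > 1`) and `‖⟨·⟩ ^ (b - ℓ)‖_p ‖h‖₁` (finite as `(ℓ - b) p > 1`),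
and Hölder's inequality gives `‖h‖₁ ≤ ‖⟨·⟩ ^ (-b)‖_{p'} ‖f‖_p` (finite as `b p' > 1`).
No constant depends on `T`.
-/

open MeasureTheory Set
open scoped ENNReal

theorem ENNReal.lintegral_mul_rpow_le_s2 {α : Type*} [MeasurableSpace α] {ν : Measure α}
    {p : ℝ} (hp : 1 < p) {a w : α → ℝ≥0∞} (ha : AEMeasurable a ν) (hw : AEMeasurable w ν) :
    (∫⁻ s, a s * w s ∂ν) ^ p ≤ (∫⁻ s, w s ∂ν) ^ (p - 1) * ∫⁻ s, a s ^ p * w s ∂ν := by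
  have hpq := Real.HolderConjugate.conjExponent hp
  set q := p.conjExponent
  have hp0 : 0 < p := by linarith
  have hq0 : 0 < q := hpq.symm.pos
  have hsplit : ∀ s, a s * w s = (a s * w s ^ (1 / p)) * w s ^ (1 / q) := fun s => by
    rw [mul_assoc, ← ENNReal.rpow_add_of_nonneg _ _ (by positivity) (by positivity),
      hpq.one_div_add_one_div, div_one, ENNReal.rpow_one]
  have hpow : ∀ s, (a s * w s ^ (1 / p)) ^ p = a s ^ p * w s := fun s => by
    rw [ENNReal.mul_rpow_of_nonneg _ _ hp0.le, ← ENNReal.rpow_mul, one_div_mul_cancel hp0.ne',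
      ENNReal.rpow_one]
  have hpow' : ∀ s, (w s ^ (1 / q)) ^ q = w s := fun s => by
    rw [← ENNReal.rpow_mul, one_div_mul_cancel hq0.ne', ENNReal.rpow_one]
  have holder := ENNReal.lintegral_mul_le_Lp_mul_Lq ν hpq
    (f := fun s => a s * w s ^ (1 / p)) (ha.mul (hw.pow_const _)) (hw.pow_const (1 / q))
  simp only [Pi.mul_apply, hpow, hpow', ← hsplit] at holder
  calc (∫⁻ s, a s * w s ∂ν) ^ p
      ≤ ((∫⁻ s, a s ^ p * w s ∂ν) ^ (1 / p) * (∫⁻ s, w s ∂ν) ^ (1 / q)) ^ p :=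
        ENNReal.rpow_le_rpow holder hp0.le
    _ = (∫⁻ s, w s ∂ν) ^ (p - 1) * ∫⁻ s, a s ^ p * w s ∂ν := by
        rw [ENNReal.mul_rpow_of_nonneg _ _ hp0.le, ← ENNReal.rpow_mul, ← ENNReal.rpow_mul,
          one_div_mul_cancel hp0.ne', ENNReal.rpow_one, mul_comm, one_div, ← div_eq_inv_mul,
          hpq.div_conj_eq_sub_one]

namespace MeasureTheory

theorem eLpNorm'_indicator_eq_eLpNorm'_restrict {α : Type*} [MeasurableSpace α]
    {μ : Measure α} {q : ℝ} (hq : 0 < q) {s : Set α} (hs : MeasurableSet s) (f : α → ℝ≥0∞) :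
    eLpNorm' (s.indicator f) q μ = eLpNorm' f q (μ.restrict s) := by
  simp only [eLpNorm', enorm_eq_self]
  rw [← lintegral_indicator hs]
  congr 2 with x
  by_cases hx : x ∈ s <;> simp [hx, hq]

variable {G : Type*} [MeasurableSpace G] {μ : Measure G} [SFinite μ] {p : ℝ} {f g : G → ℝ≥0∞}

section AddGroup

variable [AddGroup G] [MeasurableAdd₂ G] [MeasurableNeg G] [μ.IsAddLeftInvariant]

theorem lintegral_lintegral_mul_add_left (hf : Measurable f) (hg : Measurable g) :
    ∫⁻ x, ∫⁻ y, f y * g (-y + x) ∂μ ∂μ = (∫⁻ y, f y ∂μ) * ∫⁻ x, g x ∂μ := by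
  rw [lintegral_lintegral_swap (by fun_prop)]
  calc ∫⁻ y, ∫⁻ x, f y * g (-y + x) ∂μ ∂μ = ∫⁻ y, f y * ∫⁻ x, g x ∂μ ∂μ :=
        lintegral_congr fun y => by
          rw [lintegral_const_mul _ (by fun_prop), lintegral_add_left_eq_self g (-y)]
    _ = _ := lintegral_mul_const _ hf

theorem eLpNorm'_lconvolution_le_lintegral_mul (hp : 1 < p) (hf : Measurable f)
    (hg : Measurable g) : eLpNorm' (f ⋆ₗ[μ] g) p μ ≤ (∫⁻ x, f x ∂μ) * eLpNorm' g p μ := by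
  have hp0 : 0 < p := by linarith
  rw [eLpNorm', one_div, ENNReal.rpow_inv_le_iff hp0]
  calc ∫⁻ x, ‖(f ⋆ₗ[μ] g) x‖ₑ ^ p ∂μ
      ≤ ∫⁻ x, (∫⁻ y, f y ∂μ) ^ (p - 1) * ∫⁻ y, g (-y + x) ^ p * f y ∂μ ∂μ := by
        refine lintegral_mono fun x => ?_
        simp only [enorm_eq_self, lconvolution_def, mul_comm (f _)]
        exact ENNReal.lintegral_mul_rpow_le_s2 hp (by fun_prop) hf.aemeasurable
    _ = (∫⁻ y, f y ∂μ) ^ ((p - 1) + 1) * ∫⁻ x, g x ^ p ∂μ := by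
        rw [lintegral_const_mul _ (Measurable.lintegral_prod_right'
            (f := fun q : G × G => g (-q.2 + q.1) ^ p * f q.2) (by fun_prop))]
        simp only [mul_comm (g _ ^ p)]
        rw [lintegral_lintegral_mul_add_left hf (hg.pow_const p),
          ENNReal.rpow_add_of_nonneg _ _ (by linarith) zero_le_one, ENNReal.rpow_one, mul_assoc]
    _ = _ := by
        rw [sub_add_cancel, ENNReal.mul_rpow_of_nonneg _ _ hp0.le, eLpNorm', ← ENNReal.rpow_mul,
          one_div_mul_cancel hp0.ne', ENNReal.rpow_one]
        rfl

end AddGroup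

theorem eLpNorm'_lconvolution_le_mul_lintegral [AddCommGroup G] [MeasurableAdd₂ G]
    [MeasurableNeg G] [μ.IsAddLeftInvariant] [μ.IsNegInvariant] (hp : 1 < p) (hf : Measurable f)
    (hg : Measurable g) : eLpNorm' (f ⋆ₗ[μ] g) p μ ≤ eLpNorm' f p μ * ∫⁻ x, g x ∂μ := by
  rw [lconvolution_comm, mul_comm]
  exact eLpNorm'_lconvolution_le_lintegral_mul hp hg hf

end MeasureTheory

theorem Real.sqrt_one_add_sq_add_le (x y : ℝ) :
    √(1 + (x + y) ^ 2) ≤ √(1 + x ^ 2) + √(1 + y ^ 2) := by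
  have hx := Real.sq_sqrt (by positivity : (0 : ℝ) ≤ 1 + x ^ 2)
  have hy := Real.sq_sqrt (by positivity : (0 : ℝ) ≤ 1 + y ^ 2)
  have hxy : 1 + x * y ≤ √(1 + x ^ 2) * √(1 + y ^ 2) := by
    rw [← Real.sqrt_mul (by positivity)]
    exact Real.le_sqrt_of_sq_le (by nlinarith [sq_nonneg (x - y)])
  rw [Real.sqrt_le_left (by positivity)]
  nlinarith

theorem Real.sqrt_one_add_sq_rpow_le {b : ℝ} (hb : 0 ≤ b) (s t : ℝ) :
    √(1 + t ^ 2) ^ b ≤ 2 ^ b * (√(1 + s ^ 2) ^ b + √(1 + (t - s) ^ 2) ^ b) := by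
  set x := √(1 + s ^ 2)
  set y := √(1 + (t - s) ^ 2)
  have hmax : √(1 + t ^ 2) ≤ 2 * max x y := by
    calc √(1 + t ^ 2) = √(1 + (s + (t - s)) ^ 2) := by ring_nf
      _ ≤ x + y := Real.sqrt_one_add_sq_add_le s (t - s)
      _ ≤ 2 * max x y := by linarith [le_max_left x y, le_max_right x y]
  calc √(1 + t ^ 2) ^ b ≤ (2 * max x y) ^ b := by gcongr
    _ = 2 ^ b * max x y ^ b := Real.mul_rpow zero_le_two (by positivity)
    _ ≤ 2 ^ b * (x ^ b + y ^ b) := by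
        gcongr
        rcases le_total x y with h | h
        · rw [max_eq_right h]; linarith [Real.rpow_nonneg (Real.sqrt_nonneg (1 + s ^ 2)) b]
        · rw [max_eq_left h]; linarith [Real.rpow_nonneg (Real.sqrt_nonneg (1 + (t - s) ^ 2)) b]

theorem Real.min_one_rpow_neg_le {ℓ u : ℝ} (hℓ : 0 ≤ ℓ) (hu : 0 < u) :
    min 1 (u ^ (-ℓ)) ≤ √2 ^ ℓ * √(1 + u ^ 2) ^ (-ℓ) := by
  have hw : 0 < √(1 + u ^ 2) := Real.sqrt_pos.mpr (by positivity)
  rw [Real.rpow_neg hw.le, ← div_eq_mul_inv, ← Real.div_rpow (Real.sqrt_nonneg 2) hw.le]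
  rcases le_total u 1 with hu1 | hu1
  · refine (min_le_left _ _).trans (Real.one_le_rpow ?_ hℓ)
    rw [one_le_div hw]
    exact Real.sqrt_le_sqrt (by nlinarith)
  · refine (min_le_right _ _).trans ?_
    rw [Real.rpow_neg hu.le, ← Real.inv_rpow hu.le]
    gcongr
    rw [le_div_iff₀ hw, inv_mul_eq_div, div_le_iff₀ hu]
    calc √(1 + u ^ 2) ≤ √(2 * u ^ 2) := Real.sqrt_le_sqrt (by nlinarith)
      _ = √2 * u := by rw [Real.sqrt_mul zero_le_two, Real.sqrt_sq hu.le]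

theorem Real.sqrt_one_add_sq_rpow_mul_kernel_le {b ℓ : ℝ} (hb : 0 ≤ b) (hℓ : 0 ≤ ℓ) {s t : ℝ}
    (hst : s < t) {x : ℝ} (hx : 0 ≤ x) :
    √(1 + t ^ 2) ^ b * (min 1 ((t - s) ^ (-ℓ)) * x) ≤ (√2 ^ ℓ * 2 ^ b) *
      (√(1 + s ^ 2) ^ b * x * √(1 + (t - s) ^ 2) ^ (-ℓ) + x * √(1 + (t - s) ^ 2) ^ (b - ℓ)) := by
  have hw : 0 < √(1 + (t - s) ^ 2) := Real.sqrt_pos.mpr (by positivity)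
  have hsplit :
      √(1 + (t - s) ^ 2) ^ b * √(1 + (t - s) ^ 2) ^ (-ℓ) = √(1 + (t - s) ^ 2) ^ (b - ℓ) := by
    rw [← Real.rpow_add hw, ← sub_eq_add_neg]
  calc √(1 + t ^ 2) ^ b * (min 1 ((t - s) ^ (-ℓ)) * x)
      ≤ (2 ^ b * (√(1 + s ^ 2) ^ b + √(1 + (t - s) ^ 2) ^ b)) *
          ((√2 ^ ℓ * √(1 + (t - s) ^ 2) ^ (-ℓ)) * x) := by
        gcongr
        · exact Real.sqrt_one_add_sq_rpow_le hb s t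
        · exact Real.min_one_rpow_neg_le hℓ (sub_pos.mpr hst)
    _ = _ := by rw [← hsplit]; ring

noncomputable def bracketPow (a u : ℝ) : ℝ≥0∞ := ENNReal.ofReal (√(1 + u ^ 2) ^ a)

@[fun_prop]
theorem measurable_bracketPow (a : ℝ) : Measurable (bracketPow a) := by
  unfold bracketPow; fun_prop

theorem lintegral_bracketPow_rpow_lt_top {a q : ℝ} (hq : 0 < q) (haq : a * q < -1) :
    ∫⁻ u, bracketPow a u ^ q < ∞ := by
  have hint := integrable_rpow_neg_one_add_norm_sq (E := ℝ) (μ := volume) (r := -(a * q))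
    (by rw [Module.finrank_self, Nat.cast_one]; linarith)
  convert hint.lintegral_lt_top using 3 with u
  rw [bracketPow, ENNReal.ofReal_rpow_of_nonneg (by positivity) hq.le, Real.norm_eq_abs, sq_abs,
    Real.sqrt_eq_rpow, ← Real.rpow_mul (by positivity), ← Real.rpow_mul (by positivity)]
  ring_nf

theorem eLpNorm'_bracketPow_lt_top {a q : ℝ} (hq : 0 < q) (haq : a * q < -1) :
    eLpNorm' (bracketPow a) q volume < ∞ :=
  ENNReal.rpow_lt_top_of_nonneg (by positivity) (lintegral_bracketPow_rpow_lt_top hq haq).ne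

theorem lintegral_weight_mul_kernel_le_lconvolution {b ℓ T t : ℝ} (hb : 0 ≤ b) (hℓ : 0 ≤ ℓ)
    {h : ℝ → ℝ} (hh : Measurable h) (h0 : ∀ s, 0 ≤ h s) (ht : t ≤ T) :
    ENNReal.ofReal (√(1 + t ^ 2) ^ b) *
        ∫⁻ s in Ioo 0 t, ENNReal.ofReal (min 1 ((t - s) ^ (-ℓ)) * h s)
      ≤ ENNReal.ofReal (√2 ^ ℓ * 2 ^ b) *
        (((Ioo 0 T).indicator (fun s => ENNReal.ofReal (√(1 + s ^ 2) ^ b * h s)) ⋆ₗ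
            bracketPow (-ℓ)) t +
          ((Ioo 0 T).indicator (fun s => ENNReal.ofReal (h s)) ⋆ₗ bracketPow (b - ℓ)) t) := by
  set F := (Ioo 0 T).indicator (fun s => ENNReal.ofReal (√(1 + s ^ 2) ^ b * h s))
  set Φ := (Ioo 0 T).indicator (fun s => ENNReal.ofReal (h s))
  have hF : Measurable F := (by fun_prop : Measurable _).indicator measurableSet_Ioo
  have hΦ : Measurable Φ := (by fun_prop : Measurable _).indicator measurableSet_Ioo
  have hpt : ∀ s ∈ Ioo 0 t, ENNReal.ofReal (√(1 + t ^ 2) ^ b) *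
      ENNReal.ofReal (min 1 ((t - s) ^ (-ℓ)) * h s) ≤ ENNReal.ofReal (√2 ^ ℓ * 2 ^ b) *
        (F s * bracketPow (-ℓ) (-s + t) + Φ s * bracketPow (b - ℓ) (-s + t)) := by
    intro s hs
    have hsT : s ∈ Ioo 0 T := ⟨hs.1, hs.2.trans_le ht⟩
    simp only [F, Φ, indicator_of_mem hsT, bracketPow, neg_add_eq_sub]
    have hx := h0 s
    rw [← ENNReal.ofReal_mul (by positivity), ← ENNReal.ofReal_mul (by positivity),
      ← ENNReal.ofReal_mul hx, ← ENNReal.ofReal_add (by positivity) (by positivity),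
      ← ENNReal.ofReal_mul (by positivity)]
    exact ENNReal.ofReal_le_ofReal (Real.sqrt_one_add_sq_rpow_mul_kernel_le hb hℓ hs.2 hx)
  calc _ = ∫⁻ s in Ioo 0 t, ENNReal.ofReal (√(1 + t ^ 2) ^ b) *
        ENNReal.ofReal (min 1 ((t - s) ^ (-ℓ)) * h s) :=
        (lintegral_const_mul' _ _ ENNReal.ofReal_ne_top).symm
    _ ≤ ∫⁻ s in Ioo 0 t, ENNReal.ofReal (√2 ^ ℓ * 2 ^ b) *
        (F s * bracketPow (-ℓ) (-s + t) + Φ s * bracketPow (b - ℓ) (-s + t)) :=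
        setLIntegral_mono' measurableSet_Ioo hpt
    _ ≤ ∫⁻ s, ENNReal.ofReal (√2 ^ ℓ * 2 ^ b) *
        (F s * bracketPow (-ℓ) (-s + t) + Φ s * bracketPow (b - ℓ) (-s + t)) :=
        setLIntegral_le_lintegral _ _
    _ = _ := by
        rw [lintegral_const_mul' _ _ ENNReal.ofReal_ne_top, lintegral_add_left (by fun_prop)]
        rfl

theorem eLpNorm'_weight_mul_kernel_le {p b ℓ : ℝ} (hp : 1 < p) (hb : 0 ≤ b) (hℓ : 0 ≤ ℓ) (T : ℝ)
    {h : ℝ → ℝ} (hh : Measurable h) (h0 : ∀ s, 0 ≤ h s) :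
    eLpNorm' (fun t => ENNReal.ofReal (√(1 + t ^ 2) ^ b) *
        ∫⁻ s in Ioo 0 t, ENNReal.ofReal (min 1 ((t - s) ^ (-ℓ)) * h s)) p
        (volume.restrict (Ioo 0 T))
      ≤ ENNReal.ofReal (√2 ^ ℓ * 2 ^ b) * ((∫⁻ u, bracketPow (-ℓ) u) +
          eLpNorm' (bracketPow (-b)) p.conjExponent volume *
            eLpNorm' (bracketPow (b - ℓ)) p volume) *
        eLpNorm' (fun t => ENNReal.ofReal (√(1 + t ^ 2) ^ b * h t)) p
          (volume.restrict (Ioo 0 T)) := by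
  have hp0 : 0 < p := by linarith
  have hpq := Real.HolderConjugate.conjExponent hp
  set f := fun s => ENNReal.ofReal (√(1 + s ^ 2) ^ b * h s)
  set F := (Ioo 0 T).indicator f
  set Φ := (Ioo 0 T).indicator (fun s => ENNReal.ofReal (h s))
  have hf : Measurable f := by fun_prop
  have hF : Measurable F := hf.indicator measurableSet_Ioo
  have hΦ : Measurable Φ := (by fun_prop : Measurable _).indicator measurableSet_Ioo
  have hholder : ∫⁻ s, Φ s ≤ eLpNorm' (bracketPow (-b)) p.conjExponent volume *
      eLpNorm' f p (volume.restrict (Ioo 0 T)) := by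
    have hsplit : ∀ s, ENNReal.ofReal (h s) = (bracketPow (-b) * f) s := fun s => by
      have hw : 0 < √(1 + s ^ 2) ^ b := by positivity
      rw [Pi.mul_apply, bracketPow, ← ENNReal.ofReal_mul (by positivity), ← mul_assoc,
        Real.rpow_neg (by positivity), inv_mul_cancel₀ hw.ne', one_mul]
    rw [lintegral_indicator measurableSet_Ioo, lintegral_congr hsplit]
    exact (ENNReal.lintegral_mul_le_Lp_mul_Lq _ hpq.symm (by fun_prop) hf.aemeasurable).trans
      (mul_le_mul_left (eLpNorm'_mono_measure _ Measure.restrict_le_self hpq.symm.nonneg) _)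
  have hconv : Measurable (F ⋆ₗ bracketPow (-ℓ) + Φ ⋆ₗ bracketPow (b - ℓ)) :=
    (measurable_lconvolution volume hF (measurable_bracketPow _)).add
      (measurable_lconvolution volume hΦ (measurable_bracketPow _))
  have hpt : ∀ᵐ t ∂volume.restrict (Ioo 0 T),
      ‖ENNReal.ofReal (√(1 + t ^ 2) ^ b) *
          ∫⁻ s in Ioo 0 t, ENNReal.ofReal (min 1 ((t - s) ^ (-ℓ)) * h s)‖ₑ ≤
        ENNReal.ofReal (√2 ^ ℓ * 2 ^ b) *
          ‖(F ⋆ₗ bracketPow (-ℓ) + Φ ⋆ₗ bracketPow (b - ℓ)) t‖ₑ :=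
    ae_restrict_of_forall_mem measurableSet_Ioo fun t ht =>
      lintegral_weight_mul_kernel_le_lconvolution hb hℓ hh h0 ht.2.le
  calc _ ≤ ENNReal.ofReal (√2 ^ ℓ * 2 ^ b) *
          eLpNorm' (F ⋆ₗ bracketPow (-ℓ) + Φ ⋆ₗ bracketPow (b - ℓ)) p (volume.restrict (Ioo 0 T)) :=
        eLpNorm'_le_mul_eLpNorm'_of_ae_le_mul hconv.aestronglyMeasurable hpt hp0
    _ ≤ ENNReal.ofReal (√2 ^ ℓ * 2 ^ b) *
          eLpNorm' (F ⋆ₗ bracketPow (-ℓ) + Φ ⋆ₗ bracketPow (b - ℓ)) p volume := by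
        gcongr
        exact Measure.restrict_le_self
    _ ≤ ENNReal.ofReal (√2 ^ ℓ * 2 ^ b) * (eLpNorm' (F ⋆ₗ bracketPow (-ℓ)) p volume +
          eLpNorm' (Φ ⋆ₗ bracketPow (b - ℓ)) p volume) := by
        gcongr
        exact eLpNorm'_add_le
          (measurable_lconvolution volume hF (measurable_bracketPow _)).aestronglyMeasurable
          (measurable_lconvolution volume hΦ (measurable_bracketPow _)).aestronglyMeasurable hp.le
    _ ≤ ENNReal.ofReal (√2 ^ ℓ * 2 ^ b) * (eLpNorm' F p volume * (∫⁻ u, bracketPow (-ℓ) u) +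
          (∫⁻ s, Φ s) * eLpNorm' (bracketPow (b - ℓ)) p volume) := by
        gcongr
        · exact eLpNorm'_lconvolution_le_mul_lintegral hp hF (measurable_bracketPow _)
        · exact eLpNorm'_lconvolution_le_lintegral_mul hp hΦ (measurable_bracketPow _)
    _ ≤ _ := by
        rw [eLpNorm'_indicator_eq_eLpNorm'_restrict hp0 measurableSet_Ioo]
        grw [hholder]
        apply le_of_eq
        ring

/-- Scalar kernel estimate behind (5.10)-(5.12) of the paper: the convolution with
the kernel `min(1, (t-s)^{-ℓ})` is bounded on the time-weighted `L_p` space, with a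
constant independent of the time horizon `T`. -/
theorem stmt_2 (p : ℝ) (hp : 1 < p) (b ℓ : ℝ) (hb : 0 ≤ b) (hℓ : 1 < ℓ)
    (hbp : 1 < b * (p / (p - 1))) (hℓb : 1 < (ℓ - b) * p) :
    ∃ C > 0, ∀ T : ℝ, 0 < T → ∀ h : ℝ → ℝ, Measurable h → (∀ s, 0 ≤ h s) →
      (∫⁻ t in Ioo (0:ℝ) T,
          (ENNReal.ofReal (Real.sqrt (1 + t ^ 2) ^ b) *
            ∫⁻ s in Ioo (0:ℝ) t,
              ENNReal.ofReal (min 1 ((t - s) ^ (-ℓ)) * h s)) ^ p) ^ (1 / p)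
        ≤ ENNReal.ofReal C *
          (∫⁻ t in Ioo (0:ℝ) T,
            ENNReal.ofReal (Real.sqrt (1 + t ^ 2) ^ b * h t) ^ p) ^ (1 / p) := by
  set E := ENNReal.ofReal (√2 ^ ℓ * 2 ^ b) * ((∫⁻ u, bracketPow (-ℓ) u) +
    eLpNorm' (bracketPow (-b)) p.conjExponent volume * eLpNorm' (bracketPow (b - ℓ)) p volume)
  have hE : E ≠ ∞ := by
    have hκ := lintegral_bracketPow_rpow_lt_top (a := -ℓ) one_pos (by linarith)
    have hρ := eLpNorm'_bracketPow_lt_top (a := -b) (q := p.conjExponent)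
      (Real.HolderConjugate.conjExponent hp).symm.pos (by rw [Real.conjExponent]; linarith)
    have hK := eLpNorm'_bracketPow_lt_top (a := b - ℓ) (q := p) (by linarith) (by linarith)
    simp only [ENNReal.rpow_one] at hκ
    finiteness
  have hEC : E ≤ ENNReal.ofReal (E.toReal + 1) :=
    (ENNReal.le_ofReal_iff_toReal_le hE (by positivity)).mpr (by linarith)
  exact ⟨E.toReal + 1, by positivity, fun T _ h hh h0 =>
    (eLpNorm'_weight_mul_kernel_le hp hb (by linarith) T hh h0).trans (mul_le_mul_left hEC _)⟩
end

section
/- Let 1 < p < ∞, let p' = p/(p−1), and let 0 ≤ b ≤ c satisfy bp' > 1 and cp' > 1. Then there is a constant C = C(p, b, c), independent of T, such that for every T ∈ (0,∞) and every measurable h : (0,T) → [0,∞), one has sup_{0<t<T} ⟨t⟩^b ∫_0^t min(1, (t−s)^{−c}) h(s) ds ≤ C (∫_0^T (⟨s⟩^b h(s))^p ds)^{1/p}. -/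
/-!
Write the integrand as `(⟨s⟩^b h s) * (min 1 ((t - s)^(-c)) ⟨s⟩^(-b))` and apply Hölder with
exponents `p, q = p'`. It then suffices that
`∫₀ᵗ min 1 ((t - s)^(-c q)) ⟨s⟩^(-b q) ds ≲ ⟨t⟩^(-b q)`. On each half of `(0, t)` one factor is
bounded by its value at `t / 2`, which is `≲ ⟨t⟩^(-b q)` because `b ≤ c`, and the other factor
is integrable on `(0, ∞)` because `b q > 1` and `c q > 1`.
-/

open MeasureTheory Set
open scoped ENNReal

lemma lintegral_Ioi_one_rpow_neg {r : ℝ} (hr : 1 < r) :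
    ∫⁻ u in Ioi (1 : ℝ), ENNReal.ofReal (u ^ (-r)) = ENNReal.ofReal (1 / (r - 1)) := by
  rw [← ofReal_integral_eq_lintegral_ofReal (integrableOn_Ioi_rpow_of_lt (by linarith) one_pos)
      ((ae_restrict_iff' measurableSet_Ioi).2 (.of_forall fun u hu =>
        Real.rpow_nonneg (zero_lt_one.trans hu).le _)),
    integral_Ioi_rpow_of_lt (by linarith) one_pos, Real.one_rpow,
    show -r + 1 = -(r - 1) by ring, neg_div_neg_eq]

lemma lintegral_Ioi_zero_min_one_rpow_neg_le {r : ℝ} (hr : 1 < r) :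
    ∫⁻ u in Ioi (0 : ℝ), ENNReal.ofReal (min 1 (u ^ (-r))) ≤ ENNReal.ofReal (r / (r - 1)) := by
  have hsplit : r / (r - 1) = 1 + 1 / (r - 1) := by
    have : r - 1 ≠ 0 := by linarith
    field_simp
    ring
  calc ∫⁻ u in Ioi (0 : ℝ), ENNReal.ofReal (min 1 (u ^ (-r)))
      = ∫⁻ u in Ioc 0 1 ∪ Ioi 1, ENNReal.ofReal (min 1 (u ^ (-r))) := by
        rw [Ioc_union_Ioi_eq_Ioi zero_le_one]
    _ ≤ (∫⁻ _ in Ioc (0 : ℝ) 1, 1) + ∫⁻ u in Ioi (1 : ℝ), ENNReal.ofReal (u ^ (-r)) := by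
        refine (lintegral_union_le _ _ _).trans (add_le_add ?_ ?_) <;>
          refine lintegral_mono fun u => ?_
        · exact ENNReal.ofReal_le_one.2 (min_le_left _ _)
        · exact ENNReal.ofReal_le_ofReal (min_le_right _ _)
    _ = ENNReal.ofReal (r / (r - 1)) := by
        rw [lintegral_Ioi_one_rpow_neg hr, hsplit, ENNReal.ofReal_add zero_le_one
          (one_div_pos.2 (by linarith)).le]
        simp

lemma setLIntegral_Ioo_comp_sub_left_le (f : ℝ → ℝ≥0∞) (t : ℝ) :
    ∫⁻ s in Ioo 0 t, f (t - s) ≤ ∫⁻ u in Ioi 0, f u :=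
  calc ∫⁻ s in Ioo 0 t, f (t - s)
      = ∫⁻ s in Ioo 0 t, (Ioi 0).indicator f (t - s) :=
        setLIntegral_congr_fun measurableSet_Ioo fun s hs =>
          (indicator_of_mem (sub_pos.2 hs.2) f).symm
    _ ≤ ∫⁻ s, (Ioi 0).indicator f (t - s) := setLIntegral_le_lintegral _ _
    _ = ∫⁻ u in Ioi 0, f u := by
        rw [lintegral_sub_left_eq_self, lintegral_indicator measurableSet_Ioi]

lemma one_le_sqrt_one_add_sq (t : ℝ) : 1 ≤ √(1 + t ^ 2) :=
  Real.le_sqrt_of_sq_le (by nlinarith)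

lemma le_sqrt_one_add_sq (t : ℝ) : t ≤ √(1 + t ^ 2) :=
  Real.le_sqrt_of_sq_le (by nlinarith)

lemma min_one_rpow_neg_le_of_le {r u v : ℝ} (hr : 0 ≤ r) (hu : 0 < u) (huv : u ≤ v) :
    min 1 (v ^ (-r)) ≤ min 1 (u ^ (-r)) :=
  min_le_min le_rfl (Real.rpow_le_rpow_of_nonpos hu huv (neg_nonpos.2 hr))

lemma min_one_rpow_neg_le_of_exponent_le {r r' u : ℝ} (hr : 0 ≤ r) (hrr' : r ≤ r')
    (hu : 0 < u) : min 1 (u ^ (-r')) ≤ min 1 (u ^ (-r)) := by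
  rcases le_total u 1 with hu1 | hu1
  · rw [min_eq_left (Real.one_le_rpow_of_pos_of_le_one_of_nonpos hu hu1 (neg_nonpos.2 hr))]
    exact min_le_left _ _
  · exact min_le_min le_rfl (Real.rpow_le_rpow_of_exponent_le hu1 (neg_le_neg hrr'))

lemma sqrt_one_add_sq_rpow_neg_le {r s : ℝ} (hr : 0 ≤ r) (hs : 0 < s) :
    √(1 + s ^ 2) ^ (-r) ≤ min 1 (s ^ (-r)) :=
  le_min (Real.rpow_le_one_of_one_le_of_nonpos (one_le_sqrt_one_add_sq s) (neg_nonpos.2 hr))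
    (Real.rpow_le_rpow_of_nonpos hs (le_sqrt_one_add_sq s) (neg_nonpos.2 hr))

lemma min_one_rpow_nonneg {u : ℝ} (hu : 0 ≤ u) (r : ℝ) : 0 ≤ min 1 (u ^ r) :=
  le_min zero_le_one (Real.rpow_nonneg hu r)

lemma min_one_half_rpow_neg_le {r t : ℝ} (hr : 0 ≤ r) (ht : 0 < t) :
    min 1 ((t / 2) ^ (-r)) ≤ √5 ^ r * √(1 + t ^ 2) ^ (-r) := by
  have hA : 0 < √(1 + t ^ 2) := by positivity
  rw [Real.rpow_neg hA.le, ← div_eq_mul_inv, ← Real.div_rpow (by positivity) hA.le]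
  rcases le_total t 2 with ht2 | ht2
  · refine (min_le_left _ _).trans (Real.one_le_rpow ?_ hr)
    rw [one_le_div hA]
    exact Real.sqrt_le_sqrt (by nlinarith)
  · refine (min_le_right _ _).trans ?_
    rw [Real.rpow_neg (by positivity), ← Real.inv_rpow (by positivity), inv_div]
    refine Real.rpow_le_rpow (by positivity) ?_ hr
    rw [div_le_div_iff₀ ht hA]
    nlinarith [Real.sq_sqrt (show (0 : ℝ) ≤ 1 + t ^ 2 by positivity),
      Real.sq_sqrt (show (0 : ℝ) ≤ 5 by norm_num), Real.sqrt_nonneg 5,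
      mul_nonneg (Real.sqrt_nonneg 5) ht.le]

lemma min_one_rpow_neg_rpow {c q u : ℝ} (hq : 0 ≤ q) (hu : 0 < u) :
    (min 1 (u ^ (-c))) ^ q = min 1 (u ^ (-(c * q))) := by
  have hpow : (u ^ (-c)) ^ q = u ^ (-(c * q)) := by rw [← Real.rpow_mul hu.le, neg_mul]
  rcases le_total (u ^ (-c)) 1 with h | h
  · rw [min_eq_right h, ← hpow, min_eq_right (Real.rpow_le_one (by positivity) h hq)]
  · rw [min_eq_left h, ← hpow, min_eq_left (Real.one_le_rpow h hq), Real.one_rpow]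

/-- Either `s ≥ t/2` or `t - s ≥ t/2`, and in each case one factor of the product is at most
its value at `t/2`. -/
lemma min_one_rpow_neg_mul_le {β γ s t : ℝ} (hβ : 0 ≤ β) (hβγ : β ≤ γ) (hs : 0 < s)
    (hst : s < t) :
    min 1 ((t - s) ^ (-γ)) * √(1 + s ^ 2) ^ (-β)
      ≤ min 1 ((t / 2) ^ (-β)) * (min 1 (s ^ (-β)) + min 1 ((t - s) ^ (-γ))) := by
  have hk := min_one_rpow_nonneg (sub_pos.2 hst).le (-γ)
  have hw := min_one_rpow_nonneg hs.le (-β)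
  have ha := min_one_rpow_nonneg (half_pos (hs.trans hst)).le (-β)
  have hsw := sqrt_one_add_sq_rpow_neg_le hβ hs
  rcases le_total s (t / 2) with hs2 | hs2
  · have hka : min 1 ((t - s) ^ (-γ)) ≤ min 1 ((t / 2) ^ (-β)) :=
      (min_one_rpow_neg_le_of_le (hβ.trans hβγ) (by linarith) (by linarith)).trans
        (min_one_rpow_neg_le_of_exponent_le hβ hβγ (by linarith))
    calc _ ≤ min 1 ((t / 2) ^ (-β)) * min 1 (s ^ (-β)) := mul_le_mul hka hsw (by positivity) ha
      _ ≤ _ := by nlinarith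
  · have hwa : √(1 + s ^ 2) ^ (-β) ≤ min 1 ((t / 2) ^ (-β)) :=
      hsw.trans (min_one_rpow_neg_le_of_le hβ (by linarith) hs2)
    calc _ ≤ min 1 ((t - s) ^ (-γ)) * min 1 ((t / 2) ^ (-β)) :=
          mul_le_mul_of_nonneg_left hwa hk
      _ ≤ _ := by nlinarith

lemma lintegral_min_one_rpow_neg_mul_le {β γ t : ℝ} (hβ : 1 < β) (hβγ : β ≤ γ) (ht : 0 < t) :
    ∫⁻ s in Ioo 0 t, ENNReal.ofReal (min 1 ((t - s) ^ (-γ)) * √(1 + s ^ 2) ^ (-β))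
      ≤ ENNReal.ofReal (√5 ^ β * (β / (β - 1) + γ / (γ - 1)) * √(1 + t ^ 2) ^ (-β)) := by
  have hγ : 1 < γ := hβ.trans_le hβγ
  set a := min 1 ((t / 2) ^ (-β))
  have ha : 0 ≤ a := min_one_rpow_nonneg (half_pos ht).le _
  have hw : Measurable fun s : ℝ => ENNReal.ofReal (min 1 (s ^ (-β))) :=
    (measurable_const.min (measurable_id.pow_const _)).ennreal_ofReal
  calc ∫⁻ s in Ioo 0 t, ENNReal.ofReal (min 1 ((t - s) ^ (-γ)) * √(1 + s ^ 2) ^ (-β))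
      ≤ ∫⁻ s in Ioo 0 t, ENNReal.ofReal a *
          (ENNReal.ofReal (min 1 (s ^ (-β))) + ENNReal.ofReal (min 1 ((t - s) ^ (-γ)))) := by
        refine setLIntegral_mono' measurableSet_Ioo fun s hs => ?_
        rw [← ENNReal.ofReal_add (min_one_rpow_nonneg hs.1.le _)
          (min_one_rpow_nonneg (sub_pos.2 hs.2).le _), ← ENNReal.ofReal_mul ha]
        exact ENNReal.ofReal_le_ofReal
          (min_one_rpow_neg_mul_le (by linarith) hβγ hs.1 hs.2)
    _ = ENNReal.ofReal a * ((∫⁻ s in Ioo 0 t, ENNReal.ofReal (min 1 (s ^ (-β)))) +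
          ∫⁻ s in Ioo 0 t, ENNReal.ofReal (min 1 ((t - s) ^ (-γ)))) := by
        rw [lintegral_const_mul' _ _ ENNReal.ofReal_ne_top, lintegral_add_left hw]
    _ ≤ ENNReal.ofReal a * (ENNReal.ofReal (β / (β - 1)) + ENNReal.ofReal (γ / (γ - 1))) := by
        gcongr
        · exact (lintegral_mono_set Ioo_subset_Ioi_self).trans
            (lintegral_Ioi_zero_min_one_rpow_neg_le hβ)
        · exact (setLIntegral_Ioo_comp_sub_left_le
            (fun u => ENNReal.ofReal (min 1 (u ^ (-γ)))) t).trans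
            (lintegral_Ioi_zero_min_one_rpow_neg_le hγ)
    _ ≤ _ := by
        have hβ' : 0 ≤ β / (β - 1) := div_nonneg (by linarith) (by linarith)
        have hγ' : 0 ≤ γ / (γ - 1) := div_nonneg (by linarith) (by linarith)
        rw [← ENNReal.ofReal_add hβ' hγ', ← ENNReal.ofReal_mul ha]
        refine ENNReal.ofReal_le_ofReal ?_
        have := min_one_half_rpow_neg_le (by linarith) ht (r := β)
        calc a * (β / (β - 1) + γ / (γ - 1))
            ≤ √5 ^ β * √(1 + t ^ 2) ^ (-β) * (β / (β - 1) + γ / (γ - 1)) := by gcongr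
          _ = _ := by ring

lemma exists_rpow_mul_lintegral_kernel_rpow_le {b c q : ℝ} (hq : 0 < q) (hbc : b ≤ c)
    (hbq : 1 < b * q) :
    ∃ C > 0, ∀ t > 0, ENNReal.ofReal (√(1 + t ^ 2) ^ b) *
        (∫⁻ s in Ioo 0 t, ENNReal.ofReal (min 1 ((t - s) ^ (-c)) * √(1 + s ^ 2) ^ (-b)) ^ q)
          ^ (1 / q) ≤ ENNReal.ofReal C := by
  set M := √5 ^ (b * q) * (b * q / (b * q - 1) + c * q / (c * q - 1))
  have hM : 0 < M := by
    have : 1 < c * q := hbq.trans_le (by gcongr)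
    have : 0 < b * q / (b * q - 1) := div_pos (by linarith) (by linarith)
    have : 0 < c * q / (c * q - 1) := div_pos (by linarith) (by linarith)
    positivity
  refine ⟨M ^ (1 / q), by positivity, fun t ht => ?_⟩
  have hpow : ∀ s ∈ Ioo 0 t,
      ENNReal.ofReal (min 1 ((t - s) ^ (-c)) * √(1 + s ^ 2) ^ (-b)) ^ q
        = ENNReal.ofReal (min 1 ((t - s) ^ (-(c * q))) * √(1 + s ^ 2) ^ (-(b * q))) := by
    intro s hs
    rw [ENNReal.ofReal_rpow_of_nonneg (mul_nonneg (min_one_rpow_nonneg (sub_pos.2 hs.2).le _)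
        (by positivity)) hq.le, Real.mul_rpow (min_one_rpow_nonneg (sub_pos.2 hs.2).le _)
        (by positivity), min_one_rpow_neg_rpow hq.le (sub_pos.2 hs.2),
      ← Real.rpow_mul (by positivity), neg_mul]
  have hA : 0 < √(1 + t ^ 2) := by positivity
  calc ENNReal.ofReal (√(1 + t ^ 2) ^ b) *
        (∫⁻ s in Ioo 0 t, ENNReal.ofReal (min 1 ((t - s) ^ (-c)) * √(1 + s ^ 2) ^ (-b)) ^ q)
          ^ (1 / q)
      ≤ ENNReal.ofReal (√(1 + t ^ 2) ^ b) *
          ENNReal.ofReal (M * √(1 + t ^ 2) ^ (-(b * q))) ^ (1 / q) := by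
        rw [setLIntegral_congr_fun measurableSet_Ioo hpow]
        gcongr
        exact lintegral_min_one_rpow_neg_mul_le hbq (by gcongr) ht
    _ = ENNReal.ofReal (M ^ (1 / q)) := by
        rw [ENNReal.ofReal_rpow_of_nonneg (by positivity) (by positivity),
          ← ENNReal.ofReal_mul (by positivity), Real.mul_rpow hM.le (by positivity),
          ← Real.rpow_mul hA.le, mul_left_comm, ← Real.rpow_add hA,
          show b + -(b * q) * (1 / q) = 0 by field_simp; ring, Real.rpow_zero, mul_one]

theorem stmt_3_general (p : ℝ) (hp : 1 < p) (b c : ℝ) (hbc : b ≤ c)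
    (hbp : 1 < b * (p / (p - 1))) :
    ∃ C > 0, ∀ T : ℝ, 0 < T → ∀ h : ℝ → ℝ, Measurable h → (∀ s, 0 ≤ h s) →
      ∀ t ∈ Ioo (0:ℝ) T,
        ENNReal.ofReal (Real.sqrt (1 + t ^ 2) ^ b) *
            (∫⁻ s in Ioo (0:ℝ) t, ENNReal.ofReal (min 1 ((t - s) ^ (-c)) * h s))
          ≤ ENNReal.ofReal C *
            (∫⁻ s in Ioo (0:ℝ) T,
              ENNReal.ofReal (Real.sqrt (1 + s ^ 2) ^ b * h s) ^ p) ^ (1 / p) := by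
  have hpq : p.HolderConjugate (p / (p - 1)) := .conjExponent hp
  obtain ⟨C, hC, hkernel⟩ :=
    exists_rpow_mul_lintegral_kernel_rpow_le hpq.symm.pos hbc hbp
  refine ⟨C, hC, fun T _ h hh h0 t ht => ?_⟩
  set F : ℝ → ℝ≥0∞ := fun s => ENNReal.ofReal (√(1 + s ^ 2) ^ b * h s)
  set G : ℝ → ℝ≥0∞ := fun s => ENNReal.ofReal (min 1 ((t - s) ^ (-c)) * √(1 + s ^ 2) ^ (-b))
  have hFG : (fun s => ENNReal.ofReal (min 1 ((t - s) ^ (-c)) * h s)) = F * G := by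
    ext s
    rw [Pi.mul_apply, ← ENNReal.ofReal_mul (mul_nonneg (by positivity) (h0 s))]
    congr 1
    have hinv : √(1 + s ^ 2) ^ b * √(1 + s ^ 2) ^ (-b) = 1 := by
      rw [← Real.rpow_add (by positivity), add_neg_cancel, Real.rpow_zero]
    linear_combination -(min 1 ((t - s) ^ (-c)) * h s) * hinv
  have hF : Measurable F := by fun_prop
  have hG : Measurable G := by fun_prop
  rw [hFG]
  calc ENNReal.ofReal (√(1 + t ^ 2) ^ b) * ∫⁻ s in Ioo 0 t, (F * G) s
      ≤ ENNReal.ofReal (√(1 + t ^ 2) ^ b) * ((∫⁻ s in Ioo 0 t, F s ^ p) ^ (1 / p) *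
          (∫⁻ s in Ioo 0 t, G s ^ (p / (p - 1))) ^ (1 / (p / (p - 1)))) := by
        gcongr
        exact ENNReal.lintegral_mul_le_Lp_mul_Lq _ hpq hF.aemeasurable hG.aemeasurable
    _ = ENNReal.ofReal (√(1 + t ^ 2) ^ b) *
          (∫⁻ s in Ioo 0 t, G s ^ (p / (p - 1))) ^ (1 / (p / (p - 1))) *
          (∫⁻ s in Ioo 0 t, F s ^ p) ^ (1 / p) := by ring
    _ ≤ ENNReal.ofReal C * (∫⁻ s in Ioo 0 T, F s ^ p) ^ (1 / p) := by
        gcongr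
        · exact hkernel t ht.1
        · exact ht.2.le

/-- Scalar kernel estimate behind the weighted sup-in-time estimates
(5.13)-(5.14*) of the paper: the weighted supremum of the convolution with the
kernel `min(1, (t-s)^{-c})` is controlled by the weighted `L_p` norm on `(0,T)`,
with a constant independent of `T`. -/
theorem stmt_3 (p : ℝ) (hp : 1 < p) (b c : ℝ) (hb : 0 ≤ b) (hbc : b ≤ c)
    (hbp : 1 < b * (p / (p - 1))) (hcp : 1 < c * (p / (p - 1))) :
    ∃ C > 0, ∀ T : ℝ, 0 < T → ∀ h : ℝ → ℝ, Measurable h → (∀ s, 0 ≤ h s) →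
      ∀ t ∈ Ioo (0:ℝ) T,
        ENNReal.ofReal (Real.sqrt (1 + t ^ 2) ^ b) *
            (∫⁻ s in Ioo (0:ℝ) t, ENNReal.ofReal (min 1 ((t - s) ^ (-c)) * h s))
          ≤ ENNReal.ofReal C *
            (∫⁻ s in Ioo (0:ℝ) T,
              ENNReal.ofReal (Real.sqrt (1 + s ^ 2) ^ b * h s) ^ p) ^ (1 / p) :=
  stmt_3_general p hp b c hbc hbp
end
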